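/- arXiv:2504.00259 — 10 statements merged into one kernel-verified Lean document; each statement's English description precedes it below -/
import Mathlib

section
/- Let E be the n×n matrix over the associative algebra Mat(n,ℂ) ⊆ U(gl_n) whose (i,j) entry is the matrix unit E_{ij} of gl_n (viewed inside the universal enveloping algebra). Then for all i,j,k,l ∈ {1,…,n} and all r,s ≥ 0, [(E^{r+1})_{ij},(E^s)_{kl}] − [(E^r)_{ij},(E^{s+1})_{kl}] = (E^r)_{kj}(E^s)_{il} − (E^s)_{kj}(E^r)_{il}. -/
/-!
First, by induction on `m` and the Leibniz rule for commutators,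
`[(E^m)_{ij}, E_{kl}] = δ_{jk} (E^m)_{il} - δ_{li} (E^m)_{kj}`.
The identity is then proved by induction on `s`: writing `(E^{s+1})_{kl} = ∑_a (E^s)_{ka} E_{al}`
and expanding both commutators by the Leibniz rule, the first step evaluates the terms
`(E^s)_{ka} [(E^{r+1})_{ij}, E_{al}]` and `(E^{s+1})_{ka} [(E^r)_{ij}, E_{al}]`, whose
`δ_{li} (E^{r+s+1})_{kj}` parts cancel; the remaining terms are the induction hypothesis
multiplied on the right by `E_{al}`.
-/

open Finset

namespace Ring

variable {R : Type*} [Ring R]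

theorem mul_lie (a b c : R) : ⁅a * b, c⁆ = a * ⁅b, c⁆ + ⁅a, c⁆ * b := by
  simp only [Ring.lie_def]; noncomm_ring

theorem lie_mul (a b c : R) : ⁅a, b * c⁆ = b * ⁅a, c⁆ + ⁅a, b⁆ * c := by
  simp only [Ring.lie_def]; noncomm_ring

end Ring

namespace Matrix

section Leibniz

variable {ι A : Type*} [Fintype ι] [Ring A]

theorem mul_apply_lie (M N : Matrix ι ι A) (i j : ι) (x : A) :
    ⁅(M * N) i j, x⁆ = ∑ a, (M i a * ⁅N a j, x⁆ + ⁅M i a, x⁆ * N a j) := by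
  rw [mul_apply, Ring.lie_def, sum_mul, mul_sum, ← sum_sub_distrib]
  simp only [← Ring.lie_def, Ring.mul_lie]

theorem lie_mul_apply (x : A) (M N : Matrix ι ι A) (i j : ι) :
    ⁅x, (M * N) i j⁆ = ∑ a, (M i a * ⁅x, N a j⁆ + ⁅x, M i a⁆ * N a j) := by
  rw [mul_apply, Ring.lie_def, sum_mul, mul_sum, ← sum_sub_distrib]
  simp only [← Ring.lie_def, Ring.lie_mul]

end Leibniz

variable {ι A : Type*} [DecidableEq ι] [Ring A]

theorem lie_one_apply (x : A) (i j : ι) : ⁅x, (1 : Matrix ι ι A) i j⁆ = 0 := by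
  rw [one_apply]; split_ifs <;> simp [Ring.lie_def]

def SatisfiesGlRelations (E : Matrix ι ι A) : Prop :=
  ∀ i j k l, ⁅E i j, E k l⁆ = (if j = k then E i l else 0) - (if l = i then E k j else 0)

variable [Fintype ι] {E : Matrix ι ι A}

theorem SatisfiesGlRelations.pow_apply_lie (hE : E.SatisfiesGlRelations) (m : ℕ)
    (i j k l : ι) :
    ⁅(E ^ m) i j, E k l⁆ =
      (if j = k then (E ^ m) i l else 0) - (if l = i then (E ^ m) k j else 0) := by
  induction m generalizing j with
  | zero =>
    simp only [pow_zero, one_apply]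
    split_ifs <;> subst_vars <;> simp_all [Ring.lie_def]
  | succ m ih =>
    simp only [pow_succ, mul_apply_lie, hE _ j k l, ih, mul_sub, sub_mul, mul_ite, ite_mul,
      mul_zero, zero_mul, sum_add_distrib, sum_sub_distrib, sum_ite_eq, sum_ite_eq',
      sum_ite_irrel, mem_univ, if_true, ← mul_apply, sum_const_zero]
    split_ifs <;> abel

theorem SatisfiesGlRelations.sum_mul_pow_apply_lie (hE : E.SatisfiesGlRelations)
    (M : Matrix ι ι A) (m : ℕ) (i j k l : ι) :
    ∑ a, M k a * ⁅(E ^ m) i j, E a l⁆ =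
      M k j * (E ^ m) i l - if l = i then (M * E ^ m) k j else 0 := by
  simp only [hE.pow_apply_lie, mul_sub, mul_ite, mul_zero, sum_sub_distrib, sum_ite_eq,
    sum_ite_irrel, mem_univ, if_true, ← mul_apply, sum_const_zero]

theorem SatisfiesGlRelations.lie_pow_succ_sub_lie_pow_succ (hE : E.SatisfiesGlRelations)
    (r s : ℕ) (i j k l : ι) :
    ⁅(E ^ (r + 1)) i j, (E ^ s) k l⁆ - ⁅(E ^ r) i j, (E ^ (s + 1)) k l⁆ =
      (E ^ r) k j * (E ^ s) i l - (E ^ s) k j * (E ^ r) i l := by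
  induction s generalizing k l with
  | zero =>
    rw [pow_zero, lie_one_apply, zero_add, pow_one, zero_sub, hE.pow_apply_lie]
    simp only [one_apply]
    split_ifs <;> subst_vars <;> simp_all
  | succ s ih =>
    have hcomm : E ^ s * E ^ (r + 1) = E ^ (s + 1) * E ^ r := by
      rw [← pow_add, ← pow_add, Nat.add_right_comm, add_assoc]
    calc ⁅(E ^ (r + 1)) i j, (E ^ s * E) k l⁆ - ⁅(E ^ r) i j, (E ^ (s + 1) * E) k l⁆
        = (∑ a, (E ^ s) k a * ⁅(E ^ (r + 1)) i j, E a l⁆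
            - ∑ a, (E ^ (s + 1)) k a * ⁅(E ^ r) i j, E a l⁆)
          + ∑ a, (⁅(E ^ (r + 1)) i j, (E ^ s) k a⁆ - ⁅(E ^ r) i j, (E ^ (s + 1)) k a⁆)
            * E a l := by
          simp only [lie_mul_apply, sum_add_distrib, sub_mul, sum_sub_distrib]; abel
      _ = (E ^ r) k j * (E ^ (s + 1)) i l - (E ^ (s + 1)) k j * (E ^ r) i l := by
          simp only [hE.sum_mul_pow_apply_lie, ih, hcomm, sub_mul, mul_assoc, sum_sub_distrib,
            ← mul_sum, ← mul_apply, ← pow_succ]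
          abel

end Matrix

theorem stmt_0_general {A : Type*} [Ring A] {n : ℕ}
    (E : Matrix (Fin n) (Fin n) A)
    (hE : ∀ i j k l : Fin n,
      E i j * E k l - E k l * E i j =
        (if j = k then E i l else 0) - (if l = i then E k j else 0))
    (i j k l : Fin n) (r s : ℕ) :
    ((E ^ (r + 1)) i j * (E ^ s) k l - (E ^ s) k l * (E ^ (r + 1)) i j)
      - ((E ^ r) i j * (E ^ (s + 1)) k l - (E ^ (s + 1)) k l * (E ^ r) i j)
      = (E ^ r) k j * (E ^ s) i l - (E ^ s) k j * (E ^ r) i l :=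
  -- in a ring `⁅a, b⁆` is definitionally `a * b - b * a`
  Matrix.SatisfiesGlRelations.lie_pow_succ_sub_lie_pow_succ hE r s i j k l

/-- With `E` the matrix over `U(gl_n)` whose entries are the matrix
units `E_{ij}` (satisfying `[E_ij, E_kl] = δ_jk E_il − δ_li E_kj`), for all
`i,j,k,l` and `r,s ≥ 0`:
`[(E^{r+1})_{ij},(E^s)_{kl}] − [(E^r)_{ij},(E^{s+1})_{kl}]
  = (E^r)_{kj}(E^s)_{il} − (E^s)_{kj}(E^r)_{il}`. -/
theorem stmt_0 {A : Type*} [Ring A] [Algebra ℂ A] {n : ℕ}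
    (E : Matrix (Fin n) (Fin n) A)
    (hE : ∀ i j k l : Fin n,
      E i j * E k l - E k l * E i j =
        (if j = k then E i l else 0) - (if l = i then E k j else 0))
    (i j k l : Fin n) (r s : ℕ) :
    ((E ^ (r + 1)) i j * (E ^ s) k l - (E ^ s) k l * (E ^ (r + 1)) i j)
      - ((E ^ r) i j * (E ^ (s + 1)) k l - (E ^ (s + 1)) k l * (E ^ r) i j)
      = (E ^ r) k j * (E ^ s) i l - (E ^ s) k j * (E ^ r) i l :=
  stmt_0_general E hE i j k l r s
end

section
/- With E as above, for arbitrary polynomials f, g ∈ ℂ[x], and all i,j,k,l ∈ {1,…,n}: [((x·f)(E))_{ij},(g(E))_{kl}] − [(f(E))_{ij},((x·g)(E))_{kl}] = (f(E))_{kj}(g(E))_{il} − (g(E))_{kj}(f(E))_{il}, where (x·f)(x) = x·f(x) and p(E) denotes evaluation of the polynomial p at the matrix E over U(gl_n). -/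
/-!
Entries of a polynomial `g(E)` obey the same commutation relations with the `E_{ia}` as the
`E_{kl}` do, because these relations survive sums, scalars and products. The identity is
linear in `f`, so it suffices to take `f = x^p`, by induction on `p`: writing
`(E^{p+2})_{ij} = ∑_a E_{ia} (E^{p+1})_{aj}` and moving `E_{ia}` past the entries of `g(E)`
reduces the case `p + 1` to the case `p` at the indices `(a, j, k, l)` and `(k, j, i, l)`; the
remaining terms cancel because `g(E)` commutes with `E` and `E^p`.
-/

open Polynomial Finset

namespace Matrix

variable {R : Type*} [Ring R] {n : Type*} [Fintype n] [DecidableEq n]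

/-- The entries of `G` transform under `ad (E i a)` as the matrix units do in `gl_n`; thus
`IsAdjCovariant E E` is the defining relation of `U(gl_n)`. -/
def IsAdjCovariant (E G : Matrix n n R) : Prop :=
  ∀ i a k l, E i a * G k l - G k l * E i a =
    (if a = k then G i l else 0) - (if l = i then G k a else 0)

section Covariant

variable {E G G' : Matrix n n R}

omit [Fintype n] in
theorem isAdjCovariant_one : IsAdjCovariant E 1 := by
  intro i a k l
  simp only [one_apply, mul_ite, ite_mul, mul_one, one_mul, mul_zero, zero_mul]
  split_ifs <;> subst_vars <;> simp_all

omit [Fintype n] in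
theorem IsAdjCovariant.add (hG : IsAdjCovariant E G) (hG' : IsAdjCovariant E G') :
    IsAdjCovariant E (G + G') := by
  intro i a k l
  simp only [add_apply, mul_add, add_mul, add_sub_add_comm, hG i a k l, hG' i a k l]
  split_ifs <;> abel

omit [Fintype n] in
theorem IsAdjCovariant.smul {K : Type*} [CommSemiring K] [Algebra K R]
    (hG : IsAdjCovariant E G) (c : K) : IsAdjCovariant E (c • G) := by
  intro i a k l
  rw [smul_apply, smul_apply, mul_smul_comm, smul_mul_assoc, ← smul_sub, hG]
  split_ifs <;> simp [smul_sub]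

theorem IsAdjCovariant.mul (hG : IsAdjCovariant E G) (hG' : IsAdjCovariant E G') :
    IsAdjCovariant E (G * G') := by
  intro i a k l
  have leibniz : ∀ b, E i a * (G k b * G' b l) - G k b * G' b l * E i a =
      ((if a = k then G i b else 0) - (if b = i then G k a else 0)) * G' b l
        + G k b * ((if a = b then G' i l else 0) - (if l = i then G' b a else 0)) := by
    intro b
    rw [← hG, ← hG']
    noncomm_ring
  rw [mul_apply, mul_sum, sum_mul, ← sum_sub_distrib, sum_congr rfl fun b _ => leibniz b]
  simp only [sub_mul, mul_sub, sum_add_distrib, sum_sub_distrib, ite_mul, mul_ite, zero_mul,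
    mul_zero, sum_ite_eq, sum_ite_eq', mem_univ, if_true]
  by_cases hak : a = k <;> by_cases hli : l = i <;> simp [hak, hli, mul_apply]
  abel

def adjCovariantSubalgebra (K : Type*) [CommSemiring K] [Algebra K R] (E : Matrix n n R) :
    Subalgebra K (Matrix n n R) where
  carrier := {G | IsAdjCovariant E G}
  mul_mem' := IsAdjCovariant.mul
  add_mem' := IsAdjCovariant.add
  algebraMap_mem' c := by
    rw [Set.mem_ofPred_eq, Algebra.algebraMap_eq_smul_one]
    exact isAdjCovariant_one.smul c

theorem IsAdjCovariant.pow (hE : IsAdjCovariant E E) : ∀ p : ℕ, IsAdjCovariant E (E ^ p)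
  | 0 => pow_zero E ▸ isAdjCovariant_one
  | p + 1 => pow_succ E p ▸ (hE.pow p).mul hE

theorem IsAdjCovariant.aeval {K : Type*} [CommSemiring K] [Algebra K R]
    (hE : IsAdjCovariant E E) (f : K[X]) : IsAdjCovariant E (aeval E f) :=
  Algebra.adjoin_le (s := {E}) (S := adjCovariantSubalgebra K E)
    (Set.singleton_subset_iff.2 hE) (aeval_mem_adjoin_singleton K E)

end Covariant

section Shift

variable {E W : Matrix n n R}

theorem IsAdjCovariant.mul_apply_comm (hW : IsAdjCovariant E W) (V : Matrix n n R) (i j k l : n) :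
    (E * V) i j * W k l - W k l * (E * V) i j =
      ∑ a, E i a * (V a j * W k l - W k l * V a j)
        + W i l * V k j - (if l = i then (W * V) k j else 0) := by
  have expand : ∀ a, E i a * V a j * W k l - W k l * (E i a * V a j) =
      E i a * (V a j * W k l - W k l * V a j)
        + ((if a = k then W i l else 0) - (if l = i then W k a else 0)) * V a j := by
    intro a
    rw [← hW i a k l]
    noncomm_ring
  rw [mul_apply, sum_mul, mul_sum, ← sum_sub_distrib, sum_congr rfl fun a _ => expand a,
    sum_add_distrib]
  by_cases hli : l = i <;> simp [hli, sub_mul, mul_apply, add_sub_assoc]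

theorem IsAdjCovariant.sum_mul_mul_apply (hW : IsAdjCovariant E W) (V : Matrix n n R)
    (i j k l : n) :
    ∑ a, E i a * (W k j * V a l) =
      W k j * (E * V) i l + W i j * V k l - (if j = i then (W * V) k l else 0) := by
  have expand : ∀ a, E i a * (W k j * V a l) = W k j * (E i a * V a l)
      + ((if a = k then W i j else 0) - (if j = i then W k a else 0)) * V a l := by
    intro a
    rw [← hW i a k j]
    noncomm_ring
  rw [sum_congr rfl fun a _ => expand a, sum_add_distrib, ← mul_sum, ← mul_apply]
  by_cases hji : j = i <;> simp [hji, sub_mul, mul_apply, add_sub_assoc]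

/-- The identity of the theorem for `F = f(E)`, `G = g(E)`, where `E * F = (x·f)(E)`. -/
def ShiftCommRel (E F G : Matrix n n R) : Prop :=
  ∀ i j k l, ((E * F) i j * G k l - G k l * (E * F) i j)
      - (F i j * (E * G) k l - (E * G) k l * F i j)
    = F k j * G i l - G k j * F i l

variable {F F' G : Matrix n n R}

theorem shiftCommRel_one (hG : IsAdjCovariant E G) : ShiftCommRel E 1 G := by
  intro i j k l
  rw [mul_one, hG i j k l]
  simp only [one_apply]
  split_ifs <;> subst_vars <;> simp_all

theorem ShiftCommRel.add (hF : ShiftCommRel E F G) (hF' : ShiftCommRel E F' G) :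
    ShiftCommRel E (F + F') G := by
  intro i j k l
  have hsum := congrArg₂ (· + ·) (hF i j k l) (hF' i j k l)
  simp only [mul_add, add_apply] at hsum ⊢
  linear_combination (norm := noncomm_ring) hsum

theorem ShiftCommRel.smul {K : Type*} [CommSemiring K] [Algebra K R]
    (hF : ShiftCommRel E F G) (c : K) : ShiftCommRel E (c • F) G := by
  intro i j k l
  simp only [smul_apply, mul_smul_comm, smul_mul_assoc, ← smul_sub, hF i j k l]

theorem ShiftCommRel.mul_left (hE : IsAdjCovariant E E) (hF : IsAdjCovariant E F)
    (hG : IsAdjCovariant E G) (hFG : Commute F G) (hEG : Commute E G) (h : ShiftCommRel E F G) :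
    ShiftCommRel E (E * F) G := by
  intro i j k l
  have hsum : ∑ a, E i a * ((E * F) a j * G k l - G k l * (E * F) a j)
        - ∑ a, E i a * (F a j * (E * G) k l - (E * G) k l * F a j)
      = ∑ a, E i a * (F k j * G a l) - ∑ a, E i a * (G k j * F a l) := by
    rw [← sum_sub_distrib, ← sum_sub_distrib]
    refine sum_congr rfl fun a _ => ?_
    rw [← mul_sub, ← mul_sub, h a j k l]
  rw [hF.sum_mul_mul_apply, hG.sum_mul_mul_apply, hFG.eq] at hsum
  rw [hG.mul_apply_comm, (hE.mul hG).mul_apply_comm, ← mul_assoc G, ← hEG.eq, mul_assoc]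
  linear_combination (norm := abel) hsum - h k j i l

theorem shiftCommRel_pow (hE : IsAdjCovariant E E) (hG : IsAdjCovariant E G) (hEG : Commute E G) :
    ∀ p : ℕ, ShiftCommRel E (E ^ p) G
  | 0 => pow_zero E ▸ shiftCommRel_one hG
  | p + 1 => pow_succ' E p ▸
      (shiftCommRel_pow hE hG hEG p).mul_left hE (hE.pow p) hG (hEG.pow_left p) hEG

theorem shiftCommRel_aeval {K : Type*} [CommSemiring K] [Algebra K R] (hE : IsAdjCovariant E E)
    (hG : IsAdjCovariant E G) (hEG : Commute E G) (f : K[X]) : ShiftCommRel E (aeval E f) G := by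
  induction f using Polynomial.induction_on' with
  | add p q hp hq => rw [map_add]; exact hp.add hq
  | monomial m a =>
    rw [aeval_monomial, ← Algebra.smul_def]
    exact (shiftCommRel_pow hE hG hEG m).smul a

end Shift

end Matrix

/-- With `E` the matrix of matrix units over `U(gl_n)`, for arbitrary
polynomials `f, g ∈ ℂ[x]` and all `i,j,k,l`:
`[((x·f)(E))_{ij},(g(E))_{kl}] − [(f(E))_{ij},((x·g)(E))_{kl}]
  = (f(E))_{kj}(g(E))_{il} − (g(E))_{kj}(f(E))_{il}`. -/
theorem stmt_1 {A : Type*} [Ring A] [Algebra ℂ A] {n : ℕ}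
    (E : Matrix (Fin n) (Fin n) A)
    (hE : ∀ i j k l : Fin n,
      E i j * E k l - E k l * E i j =
        (if j = k then E i l else 0) - (if l = i then E k j else 0))
    (f g : Polynomial ℂ) (i j k l : Fin n) :
    ((aeval E (X * f)) i j * (aeval E g) k l
        - (aeval E g) k l * (aeval E (X * f)) i j)
      - ((aeval E f) i j * (aeval E (X * g)) k l
        - (aeval E (X * g)) k l * (aeval E f) i j)
      = (aeval E f) k j * (aeval E g) i l
        - (aeval E g) k j * (aeval E f) i l := by
  have hE' : E.IsAdjCovariant E := hE
  have hEg : Commute E (aeval E g) := by simpa using (commute_X g).map (aeval E)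
  simp only [map_mul, aeval_X]
  exact Matrix.shiftCommRel_aeval hE' (hE'.aeval g) hEg f i j k l
end

section
/- Let {p_m} be monic polynomials defined by p_0 = 1, p_{m+1}(x) = (x − a_m)p_m(x) − b_m p_{m-1}(x) with b_0 = 0 (so p_{-1} plays no role). Setting t̃^{(r)}_{ij} := (p_r(E))_{ij} with E the matrix of matrix units over U(gl_n), these elements satisfy, for all r,s ≥ 0 and i,j,k,l: [t̃^{(r+1)}_{ij} + a_r t̃^{(r)}_{ij} + b_r t̃^{(r-1)}_{ij}, t̃^{(s)}_{kl}] − [t̃^{(r)}_{ij}, t̃^{(s+1)}_{kl} + a_s t̃^{(s)}_{kl} + b_s t̃^{(s-1)}_{kl}] = t̃^{(r)}_{kj} t̃^{(s)}_{il} − t̃^{(s)}_{kj} t̃^{(r)}_{il}, where t̃^{(-1)}_{ij} := 0. -/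
/-! Under `ad E_{im}` the entries of every power `E^s` transform like the matrix units themselves
(`gl_n`-invariance). Expanding `(E^{r+1})_{ij} = ∑_q E_{iq} (E^r)_{qj}` and moving `E_{iq}` past
the other factors with this rule gives, by induction on `r` (the induction hypothesis is used
twice, once with `i` and `k` swapped),
`[(E^{r+1})_{ij}, (E^s)_{kl}] - [(E^r)_{ij}, (E^{s+1})_{kl}] = (E^r)_{kj} (E^s)_{il} - (E^s)_{kj} (E^r)_{il}`.
This extends bilinearly from powers to polynomials, and the three-term recurrence says exactly
that `t̃^{(r+1)} + a_r t̃^{(r)} + b_r t̃^{(r-1)} = (X p_r)(E)`. -/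

open Polynomial

attribute [local instance] LieRing.ofAssociativeRing

theorem Ring.mul_lie_s2 {A : Type*} [Ring A] (x y z : A) :
    ⁅x * y, z⁆ = x * ⁅y, z⁆ + ⁅x, z⁆ * y := by
  simp only [Ring.lie_def]; noncomm_ring

theorem Ring.lie_mul_s2 {A : Type*} [Ring A] (x y z : A) :
    ⁅x, y * z⁆ = y * ⁅x, z⁆ + ⁅x, y⁆ * z := by
  simp only [Ring.lie_def]; noncomm_ring

theorem Matrix.pow_succ_apply {ι A : Type*} [Fintype ι] [DecidableEq ι] [Semiring A]
    (M : Matrix ι ι A) (t : ℕ) (i j : ι) : (M ^ (t + 1)) i j = ∑ q, M i q * (M ^ t) q j := by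
  rw [pow_succ', Matrix.mul_apply]

def Matrix.HasGlCommutationRelations {ι A : Type*} [Ring A] [DecidableEq ι]
    (E : Matrix ι ι A) : Prop :=
  ∀ i j k l, ⁅E i j, E k l⁆ = (if j = k then E i l else 0) - (if l = i then E k j else 0)

namespace Matrix.HasGlCommutationRelations

variable {ι A : Type*} [Fintype ι] [DecidableEq ι] [Ring A] {E : Matrix ι ι A}

theorem lie_pow_apply (hE : E.HasGlCommutationRelations) (s : ℕ) (i m k l : ι) :
    ⁅E i m, (E ^ s) k l⁆
      = (if m = k then (E ^ s) i l else 0) - (if l = i then (E ^ s) k m else 0) := by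
  induction s generalizing k l with
  | zero =>
    rw [pow_zero, one_apply, one_apply, one_apply]
    rcases eq_or_ne m k with rfl | hmk <;> rcases eq_or_ne l i with rfl | hli <;>
      simp [*, Ring.lie_def, eq_comm]
  | succ s ih =>
    simp only [pow_succ_apply, lie_sum, Ring.lie_mul_s2, hE i m, ih, mul_sub, sub_mul, mul_ite,
      ite_mul, mul_zero, zero_mul, Finset.sum_add_distrib, Finset.sum_sub_distrib, Finset.sum_ite_eq,
      Finset.sum_ite_eq', Finset.mem_univ, if_true, Finset.sum_ite_irrel, Finset.sum_const_zero]
    simp only [← pow_succ_apply]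
    abel

theorem sum_lie_pow_mul_pow (hE : E.HasGlCommutationRelations) (v w : ℕ) (i j k l : ι) :
    ∑ q, ⁅E i q, (E ^ v) k l⁆ * (E ^ w) q j
      = (E ^ v) i l * (E ^ w) k j - if l = i then (E ^ (v + w)) k j else 0 := by
  simp only [hE.lie_pow_apply, sub_mul, ite_mul, zero_mul, Finset.sum_sub_distrib,
    Finset.sum_ite_eq', Finset.mem_univ, if_true, Finset.sum_ite_irrel, Finset.sum_const_zero]
  rw [pow_add, mul_apply]

theorem sum_mul_pow_mul_pow (hE : E.HasGlCommutationRelations) (u v : ℕ) (i j k l : ι) :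
    ∑ q, E i q * ((E ^ u) k j * (E ^ v) q l)
      = (E ^ u) k j * (E ^ (v + 1)) i l
        + ((E ^ u) i j * (E ^ v) k l - if j = i then (E ^ (u + v)) k l else 0) := by
  have hswap (q : ι) : E i q * (E ^ u) k j = (E ^ u) k j * E i q + ⁅E i q, (E ^ u) k j⁆ := by
    rw [Ring.lie_def]; abel
  simp_rw [← mul_assoc, hswap, add_mul, Finset.sum_add_distrib, mul_assoc, ← Finset.mul_sum,
    ← pow_succ_apply, hE.sum_lie_pow_mul_pow]

theorem lie_pow_succ_sub_lie_pow_succ (hE : E.HasGlCommutationRelations) (r s : ℕ)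
    (i j k l : ι) :
    ⁅(E ^ (r + 1)) i j, (E ^ s) k l⁆ - ⁅(E ^ r) i j, (E ^ (s + 1)) k l⁆
      = (E ^ r) k j * (E ^ s) i l - (E ^ s) k j * (E ^ r) i l := by
  induction r generalizing s i j k l with
  | zero =>
    rw [pow_zero, pow_one, hE.lie_pow_apply, one_apply, one_apply, one_apply]
    rcases eq_or_ne j k with rfl | hjk <;> rcases eq_or_ne l i with rfl | hli <;>
      simp [*, Ring.lie_def, eq_comm]
  | succ r ih =>
    have hexpand : ⁅(E ^ (r + 1 + 1)) i j, (E ^ s) k l⁆ - ⁅(E ^ (r + 1)) i j, (E ^ (s + 1)) k l⁆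
        = ∑ q, E i q * ((E ^ r) k j * (E ^ s) q l - (E ^ s) k j * (E ^ r) q l)
          + ∑ q, ⁅E i q, (E ^ s) k l⁆ * (E ^ (r + 1)) q j
          - ∑ q, ⁅E i q, (E ^ (s + 1)) k l⁆ * (E ^ r) q j := by
      simp only [pow_succ_apply E (r + 1), pow_succ_apply E r i j, sum_lie, Ring.mul_lie_s2, ← ih,
        mul_sub, Finset.sum_add_distrib, Finset.sum_sub_distrib]
      abel
    have ih_swap := ih s k j i l
    rw [Ring.lie_def, Ring.lie_def] at ih_swap
    rw [hexpand]
    simp_rw [mul_sub, Finset.sum_sub_distrib, hE.sum_mul_pow_mul_pow, hE.sum_lie_pow_mul_pow,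
      show s + (r + 1) = s + 1 + r by omega, add_comm s r]
    linear_combination (norm := abel1) -ih_swap

theorem lie_aeval_X_mul_sub {R : Type*} [CommRing R] [Algebra R A]
    (hE : E.HasGlCommutationRelations) (P Q : R[X]) (i j k l : ι) :
    ⁅aeval E (X * P) i j, aeval E Q k l⁆ - ⁅aeval E P i j, aeval E (X * Q) k l⁆
      = aeval E P k j * aeval E Q i l - aeval E Q k j * aeval E P i l := by
  induction P using Polynomial.induction_on' with
  | add P₁ P₂ h₁ h₂ =>
    simp only [mul_add, map_add, add_apply, add_lie, add_mul] at h₁ h₂ ⊢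
    linear_combination (norm := abel1) h₁ + h₂
  | monomial u c =>
    induction Q using Polynomial.induction_on' with
    | add Q₁ Q₂ h₁ h₂ =>
      simp only [mul_add, map_add, add_apply, lie_add, add_mul] at h₁ h₂ ⊢
      linear_combination (norm := abel1) h₁ + h₂
    | monomial v d =>
      have h := hE.lie_pow_succ_sub_lie_pow_succ u v i j k l
      simp only [X_mul_monomial, aeval_monomial, ← Algebra.smul_def, smul_apply, Ring.lie_def,
        smul_mul_smul_comm, mul_comm d c] at h ⊢
      simp only [← smul_sub, h]

end Matrix.HasGlCommutationRelations

theorem Polynomial.X_mul_eq_of_three_term_recurrence {R : Type*} [CommRing R] (a b : ℕ → R)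
    (hb0 : b 0 = 0) (p : ℕ → R[X]) (hp0 : p 0 = 1) (hp1 : p 1 = X - C (a 0))
    (hrec : ∀ m, 1 ≤ m → p (m + 1) = (X - C (a m)) * p m - C (b m) * p (m - 1)) (m : ℕ) :
    X * p m = p (m + 1) + C (a m) * p m + C (b m) * p (m - 1) := by
  cases m with
  | zero => simp [hp0, hp1, hb0]
  | succ m => rw [hrec (m + 1) (by omega)]; ring

/-- Let `p_0 = 1`, `p_{m+1}(x) = (x − a_m)p_m(x) − b_m p_{m-1}(x)` with
`b_0 = 0`.  Setting `t̃^{(r)}_{ij} := (p_r(E))_{ij}` with `E` the matrix of matrix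
units over `U(gl_n)`, these elements satisfy the `OY(gl_n, a, b)` relations
(with `t̃^{(-1)} := 0`, which together with `b_0 = 0` is captured by truncated
subtraction on the index). -/
theorem stmt_2 {A : Type*} [Ring A] [Algebra ℂ A] {n : ℕ}
    (E : Matrix (Fin n) (Fin n) A)
    (hE : ∀ i j k l : Fin n,
      E i j * E k l - E k l * E i j =
        (if j = k then E i l else 0) - (if l = i then E k j else 0))
    (a b : ℕ → ℂ) (hb0 : b 0 = 0)
    (p : ℕ → Polynomial ℂ)
    (hp0 : p 0 = 1)
    (hp1 : p 1 = X - C (a 0))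
    (hrec : ∀ m, 1 ≤ m → p (m + 1) = (X - C (a m)) * p m - C (b m) * p (m - 1))
    (tt : ℕ → Fin n → Fin n → A)
    (htt : ∀ r i j, tt r i j = (aeval E (p r)) i j)
    (r s : ℕ) (i j k l : Fin n) :
    ((tt (r + 1) i j + a r • tt r i j + b r • tt (r - 1) i j) * tt s k l
        - tt s k l * (tt (r + 1) i j + a r • tt r i j + b r • tt (r - 1) i j))
      - (tt r i j * (tt (s + 1) k l + a s • tt s k l + b s • tt (s - 1) k l)
        - (tt (s + 1) k l + a s • tt s k l + b s • tt (s - 1) k l) * tt r i j)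
      = tt r k j * tt s i l - tt s k j * tt r i l := by
  have hgl : E.HasGlCommutationRelations := fun i j k l => (Ring.lie_def _ _).trans (hE i j k l)
  have hX (m : ℕ) (x y : Fin n) :
      tt (m + 1) x y + a m • tt m x y + b m • tt (m - 1) x y = aeval E (X * p m) x y := by
    simp only [htt, X_mul_eq_of_three_term_recurrence a b hb0 p hp0 hp1 hrec, map_add, map_mul,
      aeval_C, ← Algebra.smul_def, Matrix.add_apply, Matrix.smul_apply]
  rw [hX, hX]
  simpa only [htt, Ring.lie_def] using hgl.lie_aeval_X_mul_sub (p r) (p s) i j k l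
end

section
/- In the Yangian Y(gl_n), for each r ≥ 1 define w^{(r)}_{ij} := t^{(r)}_{ij} + Σ_{l=0}^{r-1} p^r_l t^{(l)}_{ij}, where p_r(x) = x^r + Σ_{l<r} p^r_l x^l are monic polynomials satisfying p_{m+1}(x) = (x − a_m)p_m(x) − b_m p_{m-1}(x), p_0 = 1, b_0 = 0, and t^{(0)}_{ij} = δ_{ij}. Then for all r,s ≥ 0 (with w^{(0)}_{ij} = δ_{ij}, w^{(-1)}_{ij} = 0): [w^{(r+1)}_{ij} + a_r w^{(r)}_{ij} + b_r w^{(r-1)}_{ij}, w^{(s)}_{kl}] − [w^{(r)}_{ij}, w^{(s+1)}_{kl} + a_s w^{(s)}_{kl} + b_s w^{(s-1)}_{kl}] = w^{(r)}_{kj} w^{(s)}_{il} − w^{(s)}_{kj} w^{(r)}_{il}. -/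
open Polynomial

/-
The elements `w^{(r)}_{ij}` are the images of the polynomials `p_r` under the linear map
`q ↦ Σ_l q_l t^{(l)}_{ij}`, and the three-term recurrence `X p_r = p_{r+1} + a_r p_r + b_r p_{r-1}`
turns the combination `w^{(r+1)} + a_r w^{(r)} + b_r w^{(r-1)}` into the image of `X p_r`, i.e. the
image of `p_r` under the shifted map `q ↦ Σ_l q_l t^{(l+1)}_{ij}`. Both sides of the claimed
relation are then bilinear in `(p_r, p_s)`, and on pairs of monomials they reduce to the defining
relations of the Yangian.
-/

namespace Polynomial

variable {R Y : Type*} [CommRing R] [Ring Y] [Algebra R Y]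

/-- `coeffEval x q = Σ_l q_l • x l`. -/
def coeffEval (x : ℕ → Y) : R[X] →ₗ[R] Y :=
  lsum fun u => LinearMap.toSpanSingleton R Y (x u)

@[simp]
theorem coeffEval_monomial (x : ℕ → Y) (n : ℕ) (c : R) :
    coeffEval x (monomial n c) = c • x n := by
  simp [coeffEval, sum_monomial_index]

theorem coeffEval_eq_sum_range (x : ℕ → Y) {q : R[X]} {N : ℕ} (hq : q.natDegree < N) :
    coeffEval x q = ∑ u ∈ Finset.range N, q.coeff u • x u := by
  simp only [coeffEval, lsum_apply, LinearMap.toSpanSingleton_apply]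
  exact sum_over_range' q (fun n => zero_smul R (x n)) N hq

theorem coeffEval_X_mul (x : ℕ → Y) (q : R[X]) :
    coeffEval x (X * q) = coeffEval (fun u => x (u + 1)) q := by
  induction q using Polynomial.induction_on' with
  | add f g hf hg => rw [mul_add, map_add, map_add, hf, hg]
  | monomial n c => rw [X_mul_monomial, coeffEval_monomial, coeffEval_monomial]

theorem coeffEval_commutator_relation {x x' y y' z z' : ℕ → Y}
    (h : ∀ u v, (x' u * y v - y v * x' u) - (x u * y' v - y' v * x u) = z u * z' v - z v * z' u)
    (f g : R[X]) :
    (coeffEval x' f * coeffEval y g - coeffEval y g * coeffEval x' f)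
        - (coeffEval x f * coeffEval y' g - coeffEval y' g * coeffEval x f)
      = coeffEval z f * coeffEval z' g - coeffEval z g * coeffEval z' f := by
  let μ := LinearMap.mul R Y
  have hbilin := LinearMap.ext_basis (basisMonomials R) (basisMonomials R)
    (B := μ.compl₁₂ (coeffEval x') (coeffEval y) - μ.flip.compl₁₂ (coeffEval x') (coeffEval y)
      - (μ.compl₁₂ (coeffEval x) (coeffEval y') - μ.flip.compl₁₂ (coeffEval x) (coeffEval y')))
    (B' := μ.compl₁₂ (coeffEval z) (coeffEval z') - μ.flip.compl₁₂ (coeffEval z') (coeffEval z))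
    fun u v => by simpa [μ] using h u v
  simpa [μ] using LinearMap.congr_fun₂ hbilin f g

section ThreeTermRecurrence

variable {a b : ℕ → R} {p : ℕ → R[X]} (hp0 : p 0 = 1) (hp1 : p 1 = X - C (a 0))
  (hrec : ∀ m, 1 ≤ m → p (m + 1) = (X - C (a m)) * p m - C (b m) * p (m - 1))
include hp0 hp1 hrec

theorem natDegree_le_of_three_term_recurrence (m : ℕ) : (p m).natDegree ≤ m := by
  induction m using Nat.twoStepInduction with
  | zero => simp [hp0]
  | one => simpa [hp1] using natDegree_X_sub_C_le (a 0)
  | more m ih0 ih1 =>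
    rw [hrec (m + 1) m.succ_pos]
    have hmul : ((X - C (a (m + 1))) * p (m + 1)).natDegree ≤ m + 2 :=
      (natDegree_mul_le_of_le (natDegree_X_sub_C_le _) ih1).trans (by omega)
    have hC : (C (b (m + 1)) * p m).natDegree ≤ m + 2 := (natDegree_C_mul_le _ _).trans (by omega)
    exact (natDegree_sub_le_of_le hmul hC).trans (max_self _).le

theorem X_mul_eq_of_three_term_recurrence_s3 (hb0 : b 0 = 0) (m : ℕ) :
    X * p m = p (m + 1) + a m • p m + b m • p (m - 1) := by
  rw [smul_eq_C_mul, smul_eq_C_mul]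
  cases m with
  -- `p (0 - 1)` is `p 0` by truncated subtraction; `hb0` removes that term.
  | zero => rw [hp0, hp1, hb0, C_0]; ring
  | succ m => rw [hrec (m + 1) m.succ_pos]; ring

end ThreeTermRecurrence

end Polynomial

theorem stmt_3_general {Y : Type*} [Ring Y] [Algebra ℂ Y] {n : ℕ}
    (t : ℕ → Fin n → Fin n → Y)
    (hY : ∀ (r s : ℕ) (i j k l : Fin n),
      (t (r + 1) i j * t s k l - t s k l * t (r + 1) i j)
        - (t r i j * t (s + 1) k l - t (s + 1) k l * t r i j)
      = t r k j * t s i l - t s k j * t r i l)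
    (a b : ℕ → ℂ) (hb0 : b 0 = 0)
    (p : ℕ → Polynomial ℂ)
    (hp0 : p 0 = 1)
    (hp1 : p 1 = X - C (a 0))
    (hrec : ∀ m, 1 ≤ m → p (m + 1) = (X - C (a m)) * p m - C (b m) * p (m - 1))
    (w : ℕ → Fin n → Fin n → Y)
    (hw : ∀ r i j, w r i j = ∑ l ∈ Finset.range (r + 1), ((p r).coeff l) • t l i j)
    (r s : ℕ) (i j k l : Fin n) :
    ((w (r + 1) i j + a r • w r i j + b r • w (r - 1) i j) * w s k l
        - w s k l * (w (r + 1) i j + a r • w r i j + b r • w (r - 1) i j))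
      - (w r i j * (w (s + 1) k l + a s • w s k l + b s • w (s - 1) k l)
        - (w (s + 1) k l + a s • w s k l + b s • w (s - 1) k l) * w r i j)
      = w r k j * w s i l - w s k j * w r i l := by
  have hw_eval : ∀ m i j, w m i j = coeffEval (fun u => t u i j) (p m) := fun m i j => by
    rw [hw, coeffEval_eq_sum_range _
      (Nat.lt_succ_of_le (natDegree_le_of_three_term_recurrence hp0 hp1 hrec m))]
  have hshift : ∀ m i j, w (m + 1) i j + a m • w m i j + b m • w (m - 1) i j
      = coeffEval (fun u => t (u + 1) i j) (p m) := fun m i j => by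
    rw [← coeffEval_X_mul (fun u => t u i j),
      X_mul_eq_of_three_term_recurrence_s3 hp0 hp1 hrec hb0, map_add, map_add, map_smul, map_smul,
      hw_eval, hw_eval, hw_eval]
  rw [hshift, hshift]
  simp only [hw_eval]
  exact coeffEval_commutator_relation (fun u v => hY u v i j k l) (p r) (p s)

/-- In the Yangian `Y(gl_n)` (generators `t^{(r)}_{ij}`, `t^{(0)}_{ij} = δ_ij`,
with the ternary Yangian relations), the elements
`w^{(r)}_{ij} := t^{(r)}_{ij} + Σ_{l<r} p^r_l t^{(l)}_{ij}` (coefficients of the monic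
orthogonal polynomials `p_r`) satisfy the `OY(gl_n, a, b)` defining relations. -/
theorem stmt_3 {Y : Type*} [Ring Y] [Algebra ℂ Y] {n : ℕ}
    (t : ℕ → Fin n → Fin n → Y)
    (ht0 : ∀ i j, t 0 i j = if i = j then 1 else 0)
    (hY : ∀ (r s : ℕ) (i j k l : Fin n),
      (t (r + 1) i j * t s k l - t s k l * t (r + 1) i j)
        - (t r i j * t (s + 1) k l - t (s + 1) k l * t r i j)
      = t r k j * t s i l - t s k j * t r i l)
    (a b : ℕ → ℂ) (hb0 : b 0 = 0)
    (p : ℕ → Polynomial ℂ)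
    (hp0 : p 0 = 1)
    (hp1 : p 1 = X - C (a 0))
    (hrec : ∀ m, 1 ≤ m → p (m + 1) = (X - C (a m)) * p m - C (b m) * p (m - 1))
    (w : ℕ → Fin n → Fin n → Y)
    (hw : ∀ r i j, w r i j = ∑ l ∈ Finset.range (r + 1), ((p r).coeff l) • t l i j)
    (r s : ℕ) (i j k l : Fin n) :
    ((w (r + 1) i j + a r • w r i j + b r • w (r - 1) i j) * w s k l
        - w s k l * (w (r + 1) i j + a r • w r i j + b r • w (r - 1) i j))
      - (w r i j * (w (s + 1) k l + a s • w s k l + b s • w (s - 1) k l)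
        - (w (s + 1) k l + a s • w s k l + b s • w (s - 1) k l) * w r i j)
      = w r k j * w s i l - w s k j * w r i l :=
  stmt_3_general t hY a b hb0 p hp0 hp1 hrec w hw r s i j k l
end

section
/- In the tensor product of two copies of the algebra OY(gl_N, a, b) with generators t̃^{(r)}_{ij} and t̂^{(r)}_{ij} respectively, define Z^n_{ijkl} := Σ_{m=1}^n (b_1 b_2 ⋯ b_m)^{-1} t̃^{(m)}_{ij} ⊗ t̂^{(m)}_{kl} and A^s_{αβεκ} := t̃^{(s)}_{αβ} ⊗ 1 − 1 ⊗ t̂^{(s)}_{εκ} (with A^{-1} := 0). Then [A^1_{αβεκ}, Z^n_{ijkl}] = δ_{iβ} Z^n_{αjkl} − δ_{αj} Z^n_{iβkl} + δ_{εl} Z^n_{ijkκ} − δ_{kκ} Z^n_{ijεl}. -/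
/-!
Because `t^{(0)}` is the identity matrix and `b 0 = 0`, the defining relation with `r = 0` says
that `ad t^{(1)}_{αβ}` acts on every `t^{(m)}_{ij}` as the elementary matrix `E_{αβ}` of `gl_N`
acts on the indices. The two tensor factors commute, so `ad A^1_{αβεκ}` acts on
`t̃^{(m)}_{ij} ⊗ t̂^{(m)}_{kl}` factorwise, and `Z^n` is a linear combination of such terms.
-/

attribute [local instance] LieRing.ofAssociativeRing

namespace OrthogonalYangian

variable {R A : Type*} [CommRing R] [Ring A] [Algebra R A] {N : ℕ}

/-- The defining relations of `OY(gl_N, a, b)` for `t r i j = t^{(r)}_{ij}`. As `r - 1` is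
truncated subtraction, `t^{(-1)} = 0` is only encoded once `b 0 = 0` is assumed. -/
def Relations (a b : ℕ → R) (t : ℕ → Fin N → Fin N → A) : Prop :=
  ∀ (r s : ℕ) (i j k l : Fin N),
    ((t (r + 1) i j + a r • t r i j + b r • t (r - 1) i j) * t s k l
        - t s k l * (t (r + 1) i j + a r • t r i j + b r • t (r - 1) i j))
      - (t r i j * (t (s + 1) k l + a s • t s k l + b s • t (s - 1) k l)
        - (t (s + 1) k l + a s • t s k l + b s • t (s - 1) k l) * t r i j)
      = t r k j * t s i l - t s k j * t r i l

theorem commute_of_eq_ite {t : Fin N → Fin N → A} (ht : ∀ i j, t i j = if i = j then 1 else 0)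
    (i j : Fin N) (x : A) : Commute (t i j) x := by
  rw [ht]
  split_ifs
  exacts [Commute.one_left x, Commute.zero_left x]

theorem lie_one_left {a b : ℕ → R} {t : ℕ → Fin N → Fin N → A} (hrel : Relations a b t)
    (hb0 : b 0 = 0) (ht0 : ∀ i j, t 0 i j = if i = j then 1 else 0) (m : ℕ) (α β i j : Fin N) :
    ⁅t 1 α β, t m i j⁆ = (if i = β then t m α j else 0) - (if α = j then t m i β else 0) := by
  have h := hrel 0 m α β i j
  simp only [← Ring.lie_def, hb0, zero_smul, add_zero, add_lie, smul_lie, smul_zero, sub_zero,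
    zero_add, (commute_of_eq_ite ht0 _ _ _).lie_eq] at h
  rw [h, ht0, ht0, ite_mul, mul_ite, one_mul, zero_mul, mul_one, mul_zero]

theorem lie_sub_mul_of_commute {x y u v : A} (hxv : Commute x v) (hyu : Commute y u) :
    ⁅x - y, u * v⁆ = ⁅x, u⁆ * v - u * ⁅y, v⁆ := by
  simp only [Ring.lie_def, sub_mul, mul_sub, ← mul_assoc, hyu.eq]
  simp only [mul_assoc, hxv.eq]
  abel

theorem lie_sub_mul {a b : ℕ → R} {t t' : ℕ → Fin N → Fin N → A}
    (hrel : Relations a b t) (hrel' : Relations a b t') (hb0 : b 0 = 0)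
    (ht0 : ∀ i j, t 0 i j = if i = j then 1 else 0)
    (ht0' : ∀ i j, t' 0 i j = if i = j then 1 else 0)
    (hcomm : ∀ r s (i j k l : Fin N), Commute (t r i j) (t' s k l))
    (m : ℕ) (α β ε κ i j k l : Fin N) :
    ⁅t 1 α β - t' 1 ε κ, t m i j * t' m k l⁆
      = (if i = β then t m α j * t' m k l else 0) - (if α = j then t m i β * t' m k l else 0)
        + (if ε = l then t m i j * t' m k κ else 0)
        - (if k = κ then t m i j * t' m ε l else 0) := by
  rw [lie_sub_mul_of_commute (hcomm _ _ _ _ _ _) (hcomm _ _ _ _ _ _).symm,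
    lie_one_left hrel hb0 ht0, lie_one_left hrel' hb0 ht0']
  simp only [sub_mul, mul_sub, ite_mul, mul_ite, zero_mul, mul_zero]
  abel

end OrthogonalYangian

theorem stmt_5_general {B : Type*} [Ring B] [Algebra ℂ B] {N : ℕ}
    (a b : ℕ → ℂ) (hb0 : b 0 = 0)
    (tt th : ℕ → Fin N → Fin N → B)
    (htt0 : ∀ i j, tt 0 i j = if i = j then 1 else 0)
    (hth0 : ∀ i j, th 0 i j = if i = j then 1 else 0)
    (hcomm : ∀ r s (i j k l : Fin N), tt r i j * th s k l = th s k l * tt r i j)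
    (hrelt : ∀ (r s : ℕ) (i j k l : Fin N),
      ((tt (r + 1) i j + a r • tt r i j + b r • tt (r - 1) i j) * tt s k l
          - tt s k l * (tt (r + 1) i j + a r • tt r i j + b r • tt (r - 1) i j))
        - (tt r i j * (tt (s + 1) k l + a s • tt s k l + b s • tt (s - 1) k l)
          - (tt (s + 1) k l + a s • tt s k l + b s • tt (s - 1) k l) * tt r i j)
        = tt r k j * tt s i l - tt s k j * tt r i l)
    (hrelh : ∀ (r s : ℕ) (i j k l : Fin N),
      ((th (r + 1) i j + a r • th r i j + b r • th (r - 1) i j) * th s k l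
          - th s k l * (th (r + 1) i j + a r • th r i j + b r • th (r - 1) i j))
        - (th r i j * (th (s + 1) k l + a s • th s k l + b s • th (s - 1) k l)
          - (th (s + 1) k l + a s • th s k l + b s • th (s - 1) k l) * th r i j)
        = th r k j * th s i l - th s k j * th r i l)
    (Z : ℕ → Fin N → Fin N → Fin N → Fin N → B)
    (hZ : ∀ n i j k l, Z n i j k l =
      ∑ m ∈ Finset.Icc 1 n, (∏ q ∈ Finset.Icc 1 m, b q)⁻¹ • (tt m i j * th m k l))
    (n : ℕ) (α β ε κ i j k l : Fin N) :
    (tt 1 α β - th 1 ε κ) * Z n i j k l - Z n i j k l * (tt 1 α β - th 1 ε κ)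
      = (if i = β then Z n α j k l else 0) - (if α = j then Z n i β k l else 0)
        + (if ε = l then Z n i j k κ else 0) - (if k = κ then Z n i j ε l else 0) := by
  rw [← Ring.lie_def]
  simp only [hZ, lie_sum, lie_smul,
    OrthogonalYangian.lie_sub_mul hrelt hrelh hb0 htt0 hth0 hcomm, smul_add, smul_sub, smul_ite,
    smul_zero, Finset.sum_add_distrib, Finset.sum_sub_distrib, Finset.sum_ite_irrel,
    Finset.sum_const_zero]

/-- In the tensor product of two copies of `OY(gl_N, a, b)`
(modelled by two commuting families `tt`, `th` in a common algebra, each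
satisfying the `OY(gl_N, a, b)` defining relations), with
`Z^n_{ijkl} := Σ_{m=1}^n (b_1⋯b_m)^{-1} tt^{(m)}_{ij} ⊗ th^{(m)}_{kl}` and
`A^s_{αβεκ} := tt^{(s)}_{αβ} ⊗ 1 − 1 ⊗ th^{(s)}_{εκ}`, one has
`[A^1_{αβεκ}, Z^n_{ijkl}] = δ_{iβ} Z^n_{αjkl} − δ_{αj} Z^n_{iβkl}
  + δ_{εl} Z^n_{ijkκ} − δ_{kκ} Z^n_{ijεl}`. -/
theorem stmt_5 {B : Type*} [Ring B] [Algebra ℂ B] {N : ℕ}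
    (a b : ℕ → ℂ) (hb0 : b 0 = 0) (hb : ∀ m, 1 ≤ m → b m ≠ 0)
    (tt th : ℕ → Fin N → Fin N → B)
    (htt0 : ∀ i j, tt 0 i j = if i = j then 1 else 0)
    (hth0 : ∀ i j, th 0 i j = if i = j then 1 else 0)
    (hcomm : ∀ r s (i j k l : Fin N), tt r i j * th s k l = th s k l * tt r i j)
    (hrelt : ∀ (r s : ℕ) (i j k l : Fin N),
      ((tt (r + 1) i j + a r • tt r i j + b r • tt (r - 1) i j) * tt s k l
          - tt s k l * (tt (r + 1) i j + a r • tt r i j + b r • tt (r - 1) i j))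
        - (tt r i j * (tt (s + 1) k l + a s • tt s k l + b s • tt (s - 1) k l)
          - (tt (s + 1) k l + a s • tt s k l + b s • tt (s - 1) k l) * tt r i j)
        = tt r k j * tt s i l - tt s k j * tt r i l)
    (hrelh : ∀ (r s : ℕ) (i j k l : Fin N),
      ((th (r + 1) i j + a r • th r i j + b r • th (r - 1) i j) * th s k l
          - th s k l * (th (r + 1) i j + a r • th r i j + b r • th (r - 1) i j))
        - (th r i j * (th (s + 1) k l + a s • th s k l + b s • th (s - 1) k l)
          - (th (s + 1) k l + a s • th s k l + b s • th (s - 1) k l) * th r i j)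
        = th r k j * th s i l - th s k j * th r i l)
    (Z : ℕ → Fin N → Fin N → Fin N → Fin N → B)
    (hZ : ∀ n i j k l, Z n i j k l =
      ∑ m ∈ Finset.Icc 1 n, (∏ q ∈ Finset.Icc 1 m, b q)⁻¹ • (tt m i j * th m k l))
    (n : ℕ) (α β ε κ i j k l : Fin N) :
    (tt 1 α β - th 1 ε κ) * Z n i j k l - Z n i j k l * (tt 1 α β - th 1 ε κ)
      = (if i = β then Z n α j k l else 0) - (if α = j then Z n i β k l else 0)
        + (if ε = l then Z n i j k κ else 0) - (if k = κ then Z n i j ε l else 0) :=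
  stmt_5_general a b hb0 tt th htt0 hth0 hcomm hrelt hrelh Z hZ n α β ε κ i j k l
end

section
/- In the algebra OY_β(gl_n) (the case a_r = α, b_r = β for r ≥ 1, β ≠ 0, with α = 0), the defining relations imply, for all r, s ≥ 0 and indices i,j,k,l: [t̃^{(r)}_{ij}, t̃^{(s)}_{kl}] = Σ_{p,m ≥ 0, m−s ≤ p ≤ r−m−1} β^m ( t̃^{(r−p−m−1)}_{kj} t̃^{(p+s−m)}_{il} − t̃^{(p+s−m)}_{kj} t̃^{(r−p−m−1)}_{il} ). -/
/-!
Fix `i j k l` and write `C r s = [t̃^{(r)}_{ij}, t̃^{(s)}_{kl}]`. The defining relation is a recursion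
`C (r+1) s = C r (s+1) + b_s C r (s-1) - b_r C (r-1) s + G r s` with `G` antisymmetric, and
`C 0 s = 0` because `t̃^{(0)}` is scalar; these data determine `C` by induction on `r`. So it suffices
to check that the closed formula satisfies the same recursion. Reindexing its inner sum by the first
argument `a = r - p - m - 1`, the step `(r, s+1) ↦ (r+1, s)` adds one term per `m`, which
produces the diagonal sum `E r s = ∑_{m ≤ min r s} β^m G (r-m) (s-m)`; this obeys
`E (r+1) (s+1) = β E r s + G (r+1) (s+1)`, giving the `β`-terms of the recursion. At `s = 0` the inner
sums run over whole antidiagonals of `G` and vanish by antisymmetry.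
-/

open Finset

namespace OYCommutator

variable {R Y : Type*} [Semiring R] [AddCommGroup Y] [Module R Y]

def antisymmetrize (f : ℕ → ℕ → Y) (a b : ℕ) : Y := f a b - f b a

def closedForm (β : R) (G : ℕ → ℕ → Y) (r s : ℕ) : Y :=
  ∑ m ∈ range r, ∑ p ∈ Icc (m - s) (r - m - 1), β ^ m • G (r - p - m - 1) (p + s - m)

/-- The inner sum of `closedForm`, indexed by `a = r - p - m - 1`; the condition `a + 2 * m < r + s`
replaces the lower bound `p ≥ m - s`, which truncated subtraction would blur. -/
def innerSum (G : ℕ → ℕ → Y) (r s m : ℕ) : Y :=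
  ∑ a ∈ range (r - m), if a + 2 * m < r + s then G a (r + s - 2 * m - 1 - a) else 0

def diagonalSum (β : R) (G : ℕ → ℕ → Y) (r s : ℕ) : Y :=
  ∑ m ∈ range (r + 1), β ^ m • if m ≤ s then G (r - m) (s - m) else 0

theorem sum_Icc_eq_innerSum (G : ℕ → ℕ → Y) {r m : ℕ} (s : ℕ) (hm : m < r) :
    ∑ p ∈ Icc (m - s) (r - m - 1), G (r - p - m - 1) (p + s - m) = innerSum G r s m := by
  rw [innerSum, ← sum_filter]
  refine sum_nbij' (fun p => r - m - 1 - p) (fun a => r - m - 1 - a) ?_ ?_ ?_ ?_ ?_ <;>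
    intro x hx <;> simp only [mem_Icc, mem_filter, mem_range] at hx ⊢
  · omega
  · omega
  · omega
  · omega
  · congr 1 <;> omega

theorem closedForm_eq_sum_innerSum (β : R) (G : ℕ → ℕ → Y) (r s : ℕ) :
    closedForm β G r s = ∑ m ∈ range r, β ^ m • innerSum G r s m := by
  refine sum_congr rfl fun m hm => ?_
  rw [← smul_sum, sum_Icc_eq_innerSum G s (mem_range.mp hm)]

@[simp]
theorem closedForm_zero_left (β : R) (G : ℕ → ℕ → Y) (s : ℕ) : closedForm β G 0 s = 0 :=
  sum_range_zero _

theorem innerSum_succ_left (G : ℕ → ℕ → Y) {r m : ℕ} (s : ℕ) (hm : m ≤ r) :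
    innerSum G (r + 1) s m = innerSum G r (s + 1) m + if m ≤ s then G (r - m) (s - m) else 0 := by
  rw [innerSum, innerSum, show r + 1 - m = r - m + 1 by omega, sum_range_succ,
    show r + (s + 1) = r + 1 + s by omega]
  congr 1
  by_cases hms : m ≤ s
  · rw [if_pos (by omega), if_pos hms]
    congr 1; omega
  · rw [if_neg (by omega), if_neg hms]

theorem closedForm_succ_left (β : R) (G : ℕ → ℕ → Y) (r s : ℕ) :
    closedForm β G (r + 1) s = closedForm β G r (s + 1) + diagonalSum β G r s := by
  have top : innerSum G r (s + 1) r = 0 := by simp [innerSum]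
  have step : ∀ m ∈ range (r + 1), β ^ m • innerSum G (r + 1) s m
      = β ^ m • innerSum G r (s + 1) m + β ^ m • if m ≤ s then G (r - m) (s - m) else 0 :=
    fun m hm => by rw [innerSum_succ_left G s (Nat.lt_succ_iff.mp (mem_range.mp hm)), smul_add]
  rw [closedForm_eq_sum_innerSum, closedForm_eq_sum_innerSum, diagonalSum, sum_congr rfl step,
    sum_add_distrib, sum_range_succ _ r, top, smul_zero, add_zero]

theorem diagonalSum_zero_left (β : R) (G : ℕ → ℕ → Y) (s : ℕ) : diagonalSum β G 0 s = G 0 s := by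
  simp [diagonalSum]

theorem diagonalSum_zero_right (β : R) (G : ℕ → ℕ → Y) (r : ℕ) : diagonalSum β G r 0 = G r 0 := by
  rw [diagonalSum, sum_range_succ']
  simp

theorem diagonalSum_succ_succ (β : R) (G : ℕ → ℕ → Y) (r s : ℕ) :
    diagonalSum β G (r + 1) (s + 1) = β • diagonalSum β G r s + G (r + 1) (s + 1) := by
  rw [diagonalSum, sum_range_succ', diagonalSum, smul_sum]
  simp [pow_succ', mul_smul]

theorem sum_range_antisymmetrize_eq_zero (f : ℕ → ℕ → Y) (L : ℕ) :
    ∑ a ∈ range L, antisymmetrize f a (L - 1 - a) = 0 := by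
  have reflect : ∑ a ∈ range L, f (L - 1 - a) (L - 1 - (L - 1 - a)) = ∑ a ∈ range L, f a (L - 1 - a) :=
    sum_range_reflect (fun a => f a (L - 1 - a)) L
  rw [sum_congr rfl fun a ha => by rw [show L - 1 - (L - 1 - a) = a by
    have := mem_range.mp ha; omega]] at reflect
  simp only [antisymmetrize, sum_sub_distrib, reflect, sub_self]

theorem innerSum_zero_right (f : ℕ → ℕ → Y) (r m : ℕ) :
    innerSum (antisymmetrize f) r 0 m = 0 := by
  rw [innerSum, ← sum_filter, show {a ∈ range (r - m) | a + 2 * m < r + 0} = range (r - 2 * m) by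
    ext a; simp only [mem_filter, mem_range]; omega]
  exact sum_range_antisymmetrize_eq_zero f (r - 2 * m)

theorem closedForm_zero_right (β : R) (f : ℕ → ℕ → Y) (r : ℕ) :
    closedForm β (antisymmetrize f) r 0 = 0 := by
  simp [closedForm_eq_sum_innerSum, innerSum_zero_right]

theorem closedForm_succ (β : R) (f : ℕ → ℕ → Y) (r s : ℕ) :
    closedForm β (antisymmetrize f) (r + 1) s
      = closedForm β (antisymmetrize f) r (s + 1)
        + (if s = 0 then 0 else β) • closedForm β (antisymmetrize f) r (s - 1)
        - (if r = 0 then 0 else β) • closedForm β (antisymmetrize f) (r - 1) s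
        + antisymmetrize f r s := by
  rw [closedForm_succ_left]
  rcases s with _ | s
  · simp [diagonalSum_zero_right, closedForm_zero_right]
  rcases r with _ | r
  · simp [diagonalSum_zero_left]
  have hdiag := closedForm_succ_left β (antisymmetrize f) r s
  simp only [diagonalSum_succ_succ, add_tsub_cancel_right, Nat.add_one_ne_zero, if_false]
  rw [eq_sub_of_add_eq' hdiag.symm, smul_sub]
  abel

theorem eq_closedForm_of_succ (β : R) (f : ℕ → ℕ → Y) {C : ℕ → ℕ → Y}
    (hC0 : ∀ s, C 0 s = 0)
    (hC : ∀ r s, C (r + 1) s = C r (s + 1) + (if s = 0 then 0 else β) • C r (s - 1)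
      - (if r = 0 then 0 else β) • C (r - 1) s + antisymmetrize f r s)
    (r s : ℕ) : C r s = closedForm β (antisymmetrize f) r s := by
  induction r using Nat.strong_induction_on generalizing s with
  | _ r ih =>
    rcases r with _ | r
    · rw [hC0, closedForm_zero_left]
    · rw [hC, closedForm_succ, ih r (by omega), ih r (by omega), ih (r - 1) (by omega)]

end OYCommutator

open OYCommutator in
theorem stmt_7_general {Y : Type*} [Ring Y] [Algebra ℂ Y] {n : ℕ} (β : ℂ)
    (t : ℕ → Fin n → Fin n → Y)
    (ht0 : ∀ i j, t 0 i j = if i = j then 1 else 0)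
    (hrel : ∀ (r s : ℕ) (i j k l : Fin n),
      ((t (r + 1) i j + (if r = 0 then (0 : ℂ) else β) • t (r - 1) i j) * t s k l
          - t s k l * (t (r + 1) i j + (if r = 0 then (0 : ℂ) else β) • t (r - 1) i j))
        - (t r i j * (t (s + 1) k l + (if s = 0 then (0 : ℂ) else β) • t (s - 1) k l)
          - (t (s + 1) k l + (if s = 0 then (0 : ℂ) else β) • t (s - 1) k l) * t r i j)
        = t r k j * t s i l - t s k j * t r i l)
    (r s : ℕ) (i j k l : Fin n) :
    t r i j * t s k l - t s k l * t r i j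
      = ∑ m ∈ Finset.range r, ∑ p ∈ Finset.Icc (m - s) (r - m - 1),
          β ^ m • (t (r - p - m - 1) k j * t (p + s - m) i l
                    - t (p + s - m) k j * t (r - p - m - 1) i l) := by
  refine eq_closedForm_of_succ β (fun a b => t a k j * t b i l)
    (C := fun r s => t r i j * t s k l - t s k l * t r i j) (fun s => ?_) (fun r s => ?_) r s
  · by_cases h : i = j <;> simp [ht0, h]
  · rw [antisymmetrize, ← hrel r s i j k l]
    simp only [add_mul, mul_add, smul_mul_assoc, mul_smul_comm, smul_sub]
    abel

/-- In `OY_β(gl_n)` (the case `a_r = 0`, `b_r = β ≠ 0` for `r ≥ 1`,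
`b_0 = 0`), the defining relations imply the closed commutation formula
`[t̃^{(r)}_{ij}, t̃^{(s)}_{kl}] = Σ_{p,m≥0, m−s ≤ p ≤ r−m−1} β^m
  (t̃^{(r−p−m−1)}_{kj} t̃^{(p+s−m)}_{il} − t̃^{(p+s−m)}_{kj} t̃^{(r−p−m−1)}_{il})`. -/
theorem stmt_7 {Y : Type*} [Ring Y] [Algebra ℂ Y] {n : ℕ} (β : ℂ) (hβ : β ≠ 0)
    (t : ℕ → Fin n → Fin n → Y)
    (ht0 : ∀ i j, t 0 i j = if i = j then 1 else 0)
    (hrel : ∀ (r s : ℕ) (i j k l : Fin n),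
      ((t (r + 1) i j + (if r = 0 then (0 : ℂ) else β) • t (r - 1) i j) * t s k l
          - t s k l * (t (r + 1) i j + (if r = 0 then (0 : ℂ) else β) • t (r - 1) i j))
        - (t r i j * (t (s + 1) k l + (if s = 0 then (0 : ℂ) else β) • t (s - 1) k l)
          - (t (s + 1) k l + (if s = 0 then (0 : ℂ) else β) • t (s - 1) k l) * t r i j)
        = t r k j * t s i l - t s k j * t r i l)
    (r s : ℕ) (i j k l : Fin n) :
    t r i j * t s k l - t s k l * t r i j
      = ∑ m ∈ Finset.range r, ∑ p ∈ Finset.Icc (m - s) (r - m - 1),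
          β ^ m • (t (r - p - m - 1) k j * t (p + s - m) i l
                    - t (p + s - m) k j * t (r - p - m - 1) i l) :=
  stmt_7_general β t ht0 hrel r s i j k l
end

section
/- For each c ∈ ℂ and β ∈ ℂ, there exists a unique formal Laurent-type series φ_c(u) = u + c + Σ_{k≥1} c_k u^{-k} ∈ u + c + u^{-1}ℂ[[u^{-1}]] satisfying φ_c(u) + β/φ_c(u) = u + β/u + c (as an identity of formal series in u^{-1} after multiplying through by φ_c(u)·u). Moreover the family satisfies the group law φ_{c+d} = φ_c ∘ φ_d for all c, d ∈ ℂ. -/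
/-!
With `T = u⁻¹`, a solution has the form `φ = u · g` for a power series `g` with `g(0) = 1` and
`g² − (1 + cT + βT²) g + βT² = 0`. Modulo `T` this quadratic is `g² − g`, with the simple root
`1`, so Hensel's lemma in the `T`-adically complete ring `ℂ⟦T⟧` produces `g`. Two roots `φ, ψ`
of `φ² − Lφ + β = 0`, where `L = u + β/u + c`, satisfy `φ = ψ` or `φ + ψ = L`, and the latter
fails on the coefficient of `u`. For the group law, the equation of `φ_c`, rewritten as an identity of power series in
its tail, can be evaluated at `T = 1/φ_d`; together with the equation of `φ_d` it shows that
`φ_c ∘ φ_d` solves the equation for `c + d`, so uniqueness concludes.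
-/

/-- The series `φ` is of the form `u + c + Σ_{k≥1} c_k u^{-k}` and satisfies
`φ + β/φ = u + β/u + c` (multiplied through by `φ`).  Here Laurent series in
`u^{-1}` are modelled as `LaurentSeries ℂ = HahnSeries ℤ ℂ` in the variable
`T = u^{-1}`, so that `u = single (-1) 1` and `β/u = single 1 β`. -/
def IsPhi (β c : ℂ) (φ : LaurentSeries ℂ) : Prop :=
  φ.coeff (-1) = 1 ∧ φ.coeff 0 = c ∧ (∀ n : ℤ, n < -1 → φ.coeff n = 0) ∧
    φ * φ + HahnSeries.C β
      = (HahnSeries.single (-1 : ℤ) (1 : ℂ) + HahnSeries.single (1 : ℤ) β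
          + HahnSeries.C c) * φ

/-- Composition `f ∘ g` for series `f = u + f_0 + Σ_{k≥1} f_k u^{-k}`:
`(f ∘ g) = g + f_0 + Σ_{k≥1} f_k g^{-k}`.  Since `g^{-k}` has order `≥ k`
(for `g` of the relevant shape), the coefficient of `T^n` is the finite sum
`Σ_{k=1}^n f_k · (g^{-1})^k.coeff n`. -/
noncomputable def phiComp (f g : LaurentSeries ℂ) : LaurentSeries ℂ :=
  g + HahnSeries.C (f.coeff 0)
    + HahnSeries.ofPowerSeries ℤ ℂ
        (PowerSeries.mk fun n : ℕ =>
          ∑ k ∈ Finset.Icc 1 n, f.coeff (k : ℤ) * ((g⁻¹) ^ k).coeff (n : ℤ))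

theorem eq_or_add_eq_of_mul_self_add_eq {R : Type*} [CommRing R] [NoZeroDivisors R]
    {a b x y : R} (hx : x * x + b = a * x) (hy : y * y + b = a * y) : x = y ∨ x + y = a := by
  have : (x - y) * (x + y - a) = 0 := by linear_combination hx - hy
  exact (mul_eq_zero.mp this).imp sub_eq_zero.mp sub_eq_zero.mp

namespace PowerSeries

variable {R : Type*} [CommRing R]

theorem exists_mul_self_add_eq (a b : R) :
    ∃ g : R⟦X⟧, constantCoeff g = 1 ∧
      g * g + C b * X ^ 2 = (1 + C a * X + C b * X ^ 2) * g := by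
  set P : R⟦X⟧ := 1 + C a * X + C b * X ^ 2
  set f : Polynomial R⟦X⟧ :=
    Polynomial.X ^ 2 - Polynomial.C P * Polynomial.X + Polynomial.C (C b * X ^ 2)
  have hmonic : f.Monic := by
    simp only [f]; monicity!
  have hroot : f.eval 1 ∈ Ideal.span {X} := by
    rw [Ideal.mem_span_singleton]
    refine ⟨-C a, ?_⟩
    simp only [f, P, Polynomial.eval_add, Polynomial.eval_sub, Polynomial.eval_mul,
      Polynomial.eval_pow, Polynomial.eval_C, Polynomial.eval_X]
    ring
  have hsimple : IsUnit (Ideal.Quotient.mk (Ideal.span {X}) (f.derivative.eval 1)) := by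
    refine IsUnit.map _ ?_
    rw [isUnit_iff_constantCoeff]
    simp [f, P]
  obtain ⟨g, hg, hg1⟩ := HenselianRing.is_henselian f hmonic 1 hroot hsimple
  refine ⟨g, ?_, ?_⟩
  · rwa [Ideal.mem_span_singleton, X_dvd_iff, map_sub, map_one, sub_eq_zero] at hg1
  · have := hg.eq_zero
    simp only [f, Polynomial.eval_add, Polynomial.eval_sub, Polynomial.eval_mul,
      Polynomial.eval_pow, Polynomial.eval_C, Polynomial.eval_X] at this
    linear_combination this

theorem coeff_one_of_mul_self_add_eq {a b : R} {g : R⟦X⟧} (h0 : constantCoeff g = 1)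
    (hg : g * g + C b * X ^ 2 = (1 + C a * X + C b * X ^ 2) * g) :
    coeff 1 g = a := by
  simpa [coeff_mul, Finset.Nat.antidiagonal_succ, h0, pow_two, coeff_X]
    using congrArg (coeff 1) hg

end PowerSeries

namespace LaurentSeries

open HahnSeries

variable {R : Type*}

theorem single_neg_one_mul_single_one [Semiring R] :
    (single (-1 : ℤ) (1 : R) : R⸨X⸩) * single 1 1 = 1 := by
  simp [single_mul_single]

theorem coeff_single_neg_one_mul [Semiring R] (x : R⸨X⸩) (n : ℤ) :
    (single (-1 : ℤ) (1 : R) * x).coeff n = x.coeff (n + 1) := by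
  simpa using coeff_single_mul_add (r := (1 : R)) (x := x) (a := n + 1) (b := -1)

theorem single_eq_C_mul_single_one [Semiring R] (n : ℤ) (r : R) :
    (single n r : R⸨X⸩) = C r * single n 1 := by
  simp [C_apply, single_mul_single]

def positivePart [Zero R] (φ : R⸨X⸩) : PowerSeries R :=
  PowerSeries.mk fun k => if k = 0 then 0 else φ.coeff k

theorem eq_single_add_C_add_positivePart [Semiring R] {φ : R⸨X⸩}
    (hφ : ∀ n < -1, φ.coeff n = 0) :
    φ = single (-1) (φ.coeff (-1)) + C (φ.coeff 0) + ofPowerSeries ℤ R (positivePart φ) := by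
  ext n
  rcases lt_trichotomy n (-1) with hn | rfl | hn
  · simp [PowerSeries.coeff_coe, hφ n hn, C_apply, show n < 0 by omega, show n ≠ -1 by omega,
      show n ≠ 0 by omega]
  · simp [PowerSeries.coeff_coe, C_apply]
  · obtain ⟨k, rfl⟩ := Int.eq_ofNat_of_zero_le (show 0 ≤ n by omega)
    rcases Nat.eq_zero_or_pos k with rfl | hk
    · simp [PowerSeries.coeff_coe, C_apply, positivePart]
    · simp [PowerSeries.coeff_coe, C_apply, positivePart, hk.ne', show (k : ℤ) ≠ -1 by omega]

theorem order_inv {K : Type*} [Field K] (x : K⸨X⸩) : x⁻¹.order = -x.order := by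
  by_cases hx : x = 0
  · simp [hx]
  have := order_mul hx (inv_ne_zero hx)
  rw [mul_inv_cancel₀ hx, order_one] at this
  omega

theorem le_orderTop_pow [CommRing R] {y : R⸨X⸩} (hy : 0 < y.orderTop) (k : ℕ) :
    (k : WithTop ℤ) ≤ (y ^ k).orderTop := by
  refine le_trans ?_ (orderTop_nsmul_le_orderTop_pow (x := y) (n := k))
  revert hy
  induction y.orderTop using WithTop.recTopCoe with
  | top => cases k <;> simp [succ_nsmul]
  | coe n =>
    intro hy
    have hn : (0 : ℤ) < n := by exact_mod_cast hy
    have : (k : ℤ) ≤ k • n := by rw [nsmul_eq_mul]; nlinarith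
    exact_mod_cast this

theorem coeff_pow_eq_zero_of_lt [CommRing R] {y : R⸨X⸩} (hy : 0 < y.orderTop) {k : ℕ}
    {m : ℤ} (hm : m < k) : (y ^ k).coeff m = 0 :=
  coeff_eq_zero_of_lt_orderTop ((WithTop.coe_lt_coe.mpr hm).trans_le (le_orderTop_pow hy k))

theorem heval_eq_ofPowerSeries [CommRing R] {y : R⸨X⸩} (hy : 0 < y.orderTop)
    {F : PowerSeries R} (hF : PowerSeries.coeff 0 F = 0) :
    PowerSeries.heval y F = ofPowerSeries ℤ R (PowerSeries.mk fun n : ℕ =>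
      ∑ k ∈ Finset.Icc 1 n, PowerSeries.coeff k F * (y ^ k).coeff n) := by
  ext m
  rw [PowerSeries.heval_apply, PowerSeries.coeff_coe]
  split_ifs with hm
  · rw [SummableFamily.coeff_hsum_eq_sum_of_subset (t := ∅), Finset.sum_empty]
    intro k hk
    rw [Set.mem_ofPred_eq, SummableFamily.powerSeriesFamily_of_orderTop_pos hy,
      HahnSeries.coeff_smul, coeff_pow_eq_zero_of_lt hy (by omega), smul_zero] at hk
    exact absurd rfl hk
  · obtain ⟨n, rfl⟩ := Int.eq_ofNat_of_zero_le (not_lt.mp hm)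
    rw [SummableFamily.coeff_hsum_eq_sum_of_subset (t := Finset.Icc 1 n), Int.natAbs_natCast,
      PowerSeries.coeff_mk]
    · simp only [SummableFamily.powerSeriesFamily_of_orderTop_pos hy, HahnSeries.coeff_smul,
        smul_eq_mul]
    intro k hk
    rw [Set.mem_ofPred_eq, SummableFamily.powerSeriesFamily_of_orderTop_pos hy,
      HahnSeries.coeff_smul, smul_eq_mul] at hk
    rw [Finset.coe_Icc, Set.mem_Icc]
    constructor
    · by_contra! hk0
      obtain rfl : k = 0 := by omega
      simp [hF] at hk
    · by_contra! hkn
      exact hk (by rw [coeff_pow_eq_zero_of_lt hy (by omega), mul_zero])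

end LaurentSeries

open HahnSeries LaurentSeries

-- `u + β/u + c`, the right-hand side of the functional equation
noncomputable def joukowski (β c : ℂ) : ℂ⸨X⸩ := single (-1 : ℤ) 1 + single 1 β + C c

theorem eq_of_mul_self_add_eq_joukowski {β c : ℂ} {φ ψ : ℂ⸨X⸩} (hφ1 : φ.coeff (-1) = 1)
    (hψ1 : ψ.coeff (-1) = 1) (hφ : φ * φ + C β = joukowski β c * φ)
    (hψ : ψ * ψ + C β = joukowski β c * ψ) : φ = ψ := by
  refine (eq_or_add_eq_of_mul_self_add_eq hφ hψ).resolve_right fun h => ?_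
  have := congrArg (coeff · (-1)) h
  norm_num [joukowski, hφ1, hψ1, C_apply] at this

section IsPhi

variable {β c d : ℂ} {φ : ℂ⸨X⸩}

theorem IsPhi.mul_self_add_eq (h : IsPhi β c φ) : φ * φ + C β = joukowski β c * φ := h.2.2.2

theorem IsPhi.ne_zero (h : IsPhi β c φ) : φ ≠ 0 :=
  ne_zero_of_coeff_ne_zero (h.1.trans_ne one_ne_zero)

theorem IsPhi.order_eq (h : IsPhi β c φ) : φ.order = -1 := by
  rcases (order_le_of_coeff_ne_zero (h.1.trans_ne one_ne_zero)).lt_or_eq with hlt | he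
  · exact absurd (h.2.2.1 _ hlt) (mt coeff_order_eq_zero.mp h.ne_zero)
  · exact he

theorem IsPhi.zero_lt_orderTop_inv (h : IsPhi β c φ) : 0 < φ⁻¹.orderTop :=
  zero_lt_orderTop_of_order (by rw [order_inv, h.order_eq]; norm_num)

theorem IsPhi.eq_add_positivePart (h : IsPhi β c φ) :
    φ = single (-1) 1 + C c + ofPowerSeries ℤ ℂ (positivePart φ) := by
  conv_lhs => rw [eq_single_add_C_add_positivePart h.2.2.1, h.1, h.2.1]

/-- The functional equation of `φ` divided by `u` and expressed through the tail of `φ`: an identity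
of power series, hence one that can be evaluated at any series of positive order. -/
theorem IsPhi.positivePart_relation (h : IsPhi β c φ) :
    (1 + PowerSeries.C c * PowerSeries.X + PowerSeries.X * positivePart φ)
        * (PowerSeries.C β * PowerSeries.X - positivePart φ)
      = PowerSeries.C β * PowerSeries.X := by
  apply ofPowerSeries_injective (Γ := ℤ)
  simp only [map_mul, map_add, map_sub, map_one, ofPowerSeries_C, ofPowerSeries_X]
  set t := ofPowerSeries ℤ ℂ (positivePart φ)
  have hrel := h.mul_self_add_eq
  rw [h.eq_add_positivePart, joukowski, single_eq_C_mul_single_one 1 β] at hrel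
  linear_combination (-single 1 1) * hrel
    + (t - C β * single 1 1) * single_neg_one_mul_single_one (R := ℂ)

theorem phiComp_eq_heval {f g : ℂ⸨X⸩} (hg : 0 < g⁻¹.orderTop) :
    phiComp f g = g + C (f.coeff 0) + PowerSeries.heval g⁻¹ (positivePart f) := by
  rw [heval_eq_ofPowerSeries hg (by simp [positivePart]), phiComp]
  congr 3
  ext n
  simp only [PowerSeries.coeff_mk, positivePart]
  refine Finset.sum_congr rfl fun k hk => ?_
  rw [if_neg (by simp at hk; omega)]

theorem joukowski_add (β c d : ℂ) : joukowski β (c + d) = joukowski β d + C c := by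
  simp only [joukowski, map_add]; ring

theorem IsPhi.phiComp_mul_self_add_eq {φc φd : ℂ⸨X⸩} (hc : IsPhi β c φc) (hd : IsPhi β d φd) :
    phiComp φc φd * phiComp φc φd + C β = joukowski β (c + d) * phiComp φc φd := by
  have hy := hd.zero_lt_orderTop_inv
  set y := φd⁻¹
  set s := PowerSeries.heval y (positivePart φc)
  have hψ : phiComp φc φd = φd + C c + s := by rw [phiComp_eq_heval hy, hc.2.1]
  have hC (r : ℂ) : PowerSeries.heval y (PowerSeries.C r) = C r := by
    rw [PowerSeries.heval_C, ← C_mul_eq_smul, mul_one]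
  have hs : (1 + C c * y + y * s) * (C β * y - s) = C β * y := by
    simpa only [map_mul, map_add, map_sub, map_one, hC, PowerSeries.heval_X _ hy]
      using congrArg (PowerSeries.heval y) hc.positivePart_relation
  have hφy : φd * y = 1 := mul_inv_cancel₀ hd.ne_zero
  have hd' := hd.mul_self_add_eq
  -- `ψ = φd · (1 + c y + y s)`, so `hs` says `β / ψ = β y - s`, while `hd'` says
  -- `φd + β y = joukowski β d`; adding gives `ψ + β / ψ = joukowski β d + c`.
  rw [hψ, joukowski_add]
  linear_combination (-φd) * hs + ((φd + C c + s) * y) * hd'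
    - (C β + (φd + C c + s) * (φd - joukowski β d) + (C c + s) * (s - C β * y)) * hφy

end IsPhi

theorem isPhi_single_mul_ofPowerSeries {β c : ℂ} {g : PowerSeries ℂ}
    (h0 : PowerSeries.constantCoeff g = 1)
    (hg : g * g + PowerSeries.C β * PowerSeries.X ^ 2
      = (1 + PowerSeries.C c * PowerSeries.X + PowerSeries.C β * PowerSeries.X ^ 2) * g) :
    IsPhi β c (single (-1 : ℤ) 1 * ofPowerSeries ℤ ℂ g) := by
  refine ⟨?_, ?_, fun n hn => ?_, ?_⟩
  · simp [coeff_single_neg_one_mul, PowerSeries.coeff_coe, h0]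
  · simp [coeff_single_neg_one_mul, PowerSeries.coeff_coe,
      PowerSeries.coeff_one_of_mul_self_add_eq h0 hg]
  · simp [coeff_single_neg_one_mul, PowerSeries.coeff_coe, show n + 1 < 0 by omega]
  · have hmap := congrArg (ofPowerSeries ℤ ℂ) hg
    simp only [map_add, map_mul, map_pow, map_one, ofPowerSeries_C, ofPowerSeries_X] at hmap
    rw [single_eq_C_mul_single_one 1 β]
    linear_combination (single (-1 : ℤ) (1 : ℂ)) ^ 2 * hmap
      + (single (-1 : ℤ) (1 : ℂ) * ofPowerSeries ℤ ℂ g * (C β * single 1 1 + C c)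
        - C β * (1 + single (-1 : ℤ) (1 : ℂ) * single 1 1)) * single_neg_one_mul_single_one (R := ℂ)

theorem existsUnique_isPhi (β c : ℂ) : ∃! φ : ℂ⸨X⸩, IsPhi β c φ := by
  obtain ⟨g, h0, hg⟩ := PowerSeries.exists_mul_self_add_eq c β
  have hφ := isPhi_single_mul_ofPowerSeries h0 hg
  exact ⟨_, hφ, fun ψ hψ =>
    eq_of_mul_self_add_eq_joukowski hψ.1 hφ.1 hψ.mul_self_add_eq hφ.mul_self_add_eq⟩

theorem coeff_phiComp_neg_one (f g : ℂ⸨X⸩) : (phiComp f g).coeff (-1) = g.coeff (-1) := by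
  simp [phiComp, C_apply, PowerSeries.coeff_coe]

/-- for every `c ∈ ℂ` there is a unique formal series
`φ_c(u) = u + c + Σ_{k≥1} c_k u^{-k}` with `φ_c + β/φ_c = u + β/u + c`;
moreover the family satisfies the group law `φ_{c+d} = φ_c ∘ φ_d`. -/
theorem stmt_9 (β : ℂ) :
    (∀ c : ℂ, ∃! φ : LaurentSeries ℂ, IsPhi β c φ) ∧
    (∀ (c d : ℂ) (φc φd φcd : LaurentSeries ℂ),
      IsPhi β c φc → IsPhi β d φd → IsPhi β (c + d) φcd →
        φcd = phiComp φc φd) := by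
  refine ⟨existsUnique_isPhi β, fun c d φc φd φcd hc hd hcd => ?_⟩
  exact eq_of_mul_self_add_eq_joukowski hcd.1 ((coeff_phiComp_neg_one φc φd).trans hd.1)
    hcd.mul_self_add_eq (hc.phiComp_mul_self_add_eq hd)
end

section
/- Fix a representation ψ: 𝒜 → End(ℂ^m) of a Lie algebra 𝒜. On a vector space spanned by symbols x_{ij}(a), a ∈ 𝒜, 1 ≤ i,j ≤ m (linear in a), the bracket [x_{ij}(a), x_{kl}(b)] := ψ(a)_{li} x_{kj}(b) − ψ(b)_{jk} x_{il}(a) satisfies bilinearity, antisymmetry, and the Jacobi identity, hence defines a Lie algebra structure (the ternary Lie algebra 𝒜^{tern}), provided the symbols x_{ij}(a) are realized as the operators D̃_{ij}(a) = Σ_k ψ(a)_{ki} t^{(1)}_{jk} inside U(gl_m) and are taken with the induced bracket. -/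
/-!
Expanding both realizations bilinearly, the commutator becomes
`∑ p q, ψ(a)_{pi} ψ(b)_{qk} [t_{jp}, t_{lq}]`; each `gl` commutator is a difference of two
Kronecker deltas, and each delta collapses one of the two sums to a single realization.
-/

attribute [local instance 100] LieRing.ofAssociativeRing

section

open Finset

variable {R Y n : Type*} [CommRing R] [Ring Y] [Algebra R Y] [Fintype n]

def IsGLRelations [DecidableEq n] (t : n → n → Y) : Prop :=
  ∀ i j k l, t i j * t k l - t k l * t i j
    = (if k = j then t i l else 0) - (if i = l then t k j else 0)

def glRealization (t : n → n → Y) (A : Matrix n n R) (i j : n) : Y :=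
  ∑ k, A k i • t j k

lemma glRealization_mul (t : n → n → Y) (A B : Matrix n n R) (i j k l : n) :
    glRealization t A i j * glRealization t B k l
      = ∑ p, ∑ q, (A p i * B q k) • (t j p * t l q) := by
  simp only [glRealization, sum_mul_sum, smul_mul_smul_comm]

theorem glRealization_commutator [DecidableEq n] {t : n → n → Y} (ht : IsGLRelations t)
    (A B : Matrix n n R) (i j k l : n) :
    glRealization t A i j * glRealization t B k l
        - glRealization t B k l * glRealization t A i j
      = A l i • glRealization t B k j - B j k • glRealization t A i l := by
  have hswap : glRealization t B k l * glRealization t A i j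
      = ∑ p, ∑ q, (A p i * B q k) • (t l q * t j p) := by
    rw [glRealization_mul, sum_comm]
    simp only [mul_comm (B _ k)]
  calc _ = ∑ p, ∑ q, (A p i * B q k) • (t j p * t l q - t l q * t j p) := by
        simp only [glRealization_mul, hswap, smul_sub, sum_sub_distrib]
    _ = ∑ p, ∑ q, ((if l = p then (A p i * B q k) • t j q else 0)
          - if j = q then (A p i * B q k) • t l p else 0) := by
        refine sum_congr rfl fun p _ => sum_congr rfl fun q _ => ?_
        rw [ht, smul_sub, smul_ite, smul_ite, smul_zero]
    _ = _ := by
        rw [sum_congr rfl fun p _ => sum_sub_distrib .., sum_sub_distrib, sum_comm]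
        simp only [sum_ite_eq, mem_univ, if_true, glRealization, smul_sum, smul_smul, mul_comm]

end

/-- realize the symbols `x_{ij}(a)` as
`D̃_{ij}(a) = Σ_k ψ(a)_{ki} t^{(1)}_{jk}` inside `U(gl_m)` (where the `t^{(1)}_{jk}`
satisfy the `gl_m` relations).  Then the span of these elements is closed under
the commutator and the induced bracket is
`[x_{ij}(a), x_{kl}(b)] = ψ(a)_{li} x_{kj}(b) − ψ(b)_{jk} x_{il}(a)`,
so it defines a Lie algebra structure (the ternary Lie algebra `𝒜^{tern}`):
bilinearity, antisymmetry and Jacobi hold automatically for the commutator. -/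
theorem stmt_16 {Y L : Type*} [Ring Y] [Algebra ℂ Y]
    [LieRing L] [LieAlgebra ℂ L] {m : ℕ}
    (t1 : Fin m → Fin m → Y)
    (hgl : ∀ i j k l : Fin m,
      t1 i j * t1 k l - t1 k l * t1 i j
        = (if k = j then t1 i l else 0) - (if i = l then t1 k j else 0))
    (ψ : L →ₗ⁅ℂ⁆ Matrix (Fin m) (Fin m) ℂ)
    (Dt : L → Fin m → Fin m → Y)
    (hDt : ∀ a i j, Dt a i j = ∑ k, (ψ a) k i • t1 j k)
    (a b : L) (i j k l : Fin m) :
    Dt a i j * Dt b k l - Dt b k l * Dt a i j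
        = (ψ a) l i • Dt b k j - (ψ b) j k • Dt a i l
    ∧ Dt a i j * Dt b k l - Dt b k l * Dt a i j
        ∈ Submodule.span ℂ
            (Set.range fun x : L × Fin m × Fin m => Dt x.1 x.2.1 x.2.2) := by
  obtain rfl : Dt = fun a => glRealization t1 (ψ a) := funext fun a => funext₂ (hDt a)
  have hcomm := glRealization_commutator hgl (ψ a) (ψ b) i j k l
  refine ⟨hcomm, hcomm ▸ sub_mem ?_ ?_⟩
  · exact Submodule.smul_mem _ _ (Submodule.subset_span ⟨(b, k, j), rfl⟩)
  · exact Submodule.smul_mem _ _ (Submodule.subset_span ⟨(a, i, l), rfl⟩)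
end

section
/- For the Lie algebra sl(2) with basis e₁, e₂, e₃ satisfying [e₁,e₂] = e₃, [e₃,e₂] = −2e₂, [e₃,e₁] = 2e₁, and ψ = ad the adjoint representation on V = sl(2) ≅ ℂ³, the ternary Lie algebra sl(2)^{tern} (the span of the elements D̃_{ij}(e_k) = Σ_m (ad e_k)_{mi} t^{(1)}_{jm}, 1 ≤ i,j,k ≤ 3, inside gl(3) realized by t^{(1)}_{jm} = E_{jm}) is isomorphic to gl(3); in particular it has dimension 9. -/
/-!
The element `D̃_{ij}(a) = Σ_m a_{mi} E_{jm}` is the matrix whose only nonzero row is row `j`,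
equal to the `i`-th column of `a`. Hence the `D̃_{ij}(a)` span `gl(n)` as soon as the columns of
the matrices `a` span the column space, and for `ad` on `sl(2)` the columns `2e₁, -2e₂` of `ad e₃`
and `e₃` of `ad e₁` already do.
-/

open Submodule

namespace Matrix

variable {R ι m n p : Type*} [CommSemiring R] [Fintype n] [DecidableEq m] [DecidableEq n]

theorem sum_smul_single_one (j : m) (w : n → R) :
    ∑ k, w k • single j k (1 : R) = of (Pi.single j w) := by
  ext i k
  by_cases hi : i = j
  · subst hi
    simp [sum_apply, single_apply]
  · simp [sum_apply, Ne.symm hi, hi]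

theorem span_sum_smul_single_eq_top [Fintype m] (a : ι → Matrix n p R)
    (ha : span R (Set.range fun x : ι × p => fun k => a x.1 k x.2) = ⊤) :
    span R (Set.range fun x : ι × p × m => ∑ k, a x.1 k x.2.1 • single x.2.2 k (1 : R)) = ⊤ := by
  set S := span R (Set.range fun x : ι × p × m => ∑ k, a x.1 k x.2.1 • single x.2.2 k (1 : R))
  have row_mem : ∀ j w, of (Pi.single j w) ∈ S := by
    intro j w
    let L : (n → R) →ₗ[R] Matrix m n R := LinearMap.single R (fun _ : m => n → R) j
    have : span R (Set.range fun x : ι × p => fun k => a x.1 k x.2) ≤ S.comap L := by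
      rw [span_le]
      rintro _ ⟨⟨i, c⟩, rfl⟩
      show of (Pi.single j _) ∈ S
      rw [← sum_smul_single_one]
      exact subset_span ⟨(i, c, j), rfl⟩
    exact (ha ▸ this) mem_top
  rw [eq_top_iff]
  rintro A -
  rw [← Finset.univ_sum_single A]
  exact sum_mem fun j _ => row_mem j (A j)

end Matrix

theorem span_columns_ad_sl2_eq_top (adM : Fin 3 → Matrix (Fin 3) (Fin 3) ℂ)
    (h0 : adM 0 = !![0, 0, -2; 0, 0, 0; 0, 1, 0])
    (h2 : adM 2 = !![2, 0, 0; 0, -2, 0; 0, 0, 0]) :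
    span ℂ (Set.range fun x : Fin 3 × Fin 3 => fun k => adM x.1 k x.2) = ⊤ := by
  set C := span ℂ (Set.range fun x : Fin 3 × Fin 3 => fun k => adM x.1 k x.2)
  have col_mem : ∀ l c, (fun k => adM l k c) ∈ C := fun l c => subset_span ⟨(l, c), rfl⟩
  have e0 : Pi.single 0 1 = (2 : ℂ)⁻¹ • fun k => adM 2 k 0 := by
    ext k; fin_cases k <;> simp [h2]
  have e1 : Pi.single 1 1 = (-2 : ℂ)⁻¹ • fun k => adM 2 k 1 := by
    ext k; fin_cases k <;> simp [h2]
  have e2 : Pi.single 2 1 = fun k => adM 0 k 1 := by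
    ext k; fin_cases k <;> simp [h0]
  have single_mem : ∀ k : Fin 3, Pi.single k 1 ∈ C := by
    intro k
    fin_cases k
    · exact e0 ▸ C.smul_mem _ (col_mem 2 0)
    · exact e1 ▸ C.smul_mem _ (col_mem 2 1)
    · exact e2 ▸ col_mem 0 1
  rw [eq_top_iff]
  rintro x -
  rw [pi_eq_sum_univ' x]
  exact sum_mem fun k _ => C.smul_mem _ (single_mem k)

theorem stmt_17_general
    (adM : Fin 3 → Matrix (Fin 3) (Fin 3) ℂ)
    (h0 : adM 0 = !![0, 0, -2; 0, 0, 0; 0, 1, 0])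
    (h2 : adM 2 = !![2, 0, 0; 0, -2, 0; 0, 0, 0]) :
    Submodule.span ℂ
        (Set.range fun x : Fin 3 × Fin 3 × Fin 3 =>
          ∑ m : Fin 3, (adM x.1) m x.2.1 • Matrix.single x.2.2 m (1 : ℂ))
      = (⊤ : Submodule ℂ (Matrix (Fin 3) (Fin 3) ℂ))
    ∧ Module.finrank ℂ (Matrix (Fin 3) (Fin 3) ℂ) = 9 :=
  ⟨Matrix.span_sum_smul_single_eq_top adM (span_columns_ad_sl2_eq_top adM h0 h2),
    by simp [Module.finrank_matrix]⟩

/-- for `sl(2)` with basis `e₁, e₂, e₃` (`[e₁,e₂] = e₃`,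
`[e₃,e₂] = −2e₂`, `[e₃,e₁] = 2e₁`) and `ψ = ad` (whose matrices in this basis
are `adM 0, adM 1, adM 2` below), the ternary Lie algebra `sl(2)^{tern}`, i.e.
the span of the elements `D̃_{ij}(e_k) = Σ_m (ad e_k)_{mi} E_{jm}` inside
`gl(3)`, is all of `gl(3)`; in particular it has dimension 9. -/
theorem stmt_17
    (adM : Fin 3 → Matrix (Fin 3) (Fin 3) ℂ)
    (h0 : adM 0 = !![0, 0, -2; 0, 0, 0; 0, 1, 0])
    (h1 : adM 1 = !![0, 0, 0; 0, 0, 2; -1, 0, 0])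
    (h2 : adM 2 = !![2, 0, 0; 0, -2, 0; 0, 0, 0]) :
    Submodule.span ℂ
        (Set.range fun x : Fin 3 × Fin 3 × Fin 3 =>
          ∑ m : Fin 3, (adM x.1) m x.2.1 • Matrix.single x.2.2 m (1 : ℂ))
      = (⊤ : Submodule ℂ (Matrix (Fin 3) (Fin 3) ℂ))
    ∧ Module.finrank ℂ (Matrix (Fin 3) (Fin 3) ℂ) = 9 :=
  stmt_17_general adM h0 h2
end

section
/- Substituting X̃^{(r)}_{ij}(a) := h^{r-1} X^{(r)}_{ij}(a) into the polarized ternary relations yields [X̃^{(r)}_{ij}(a), X̃^{(s)}_{kl}(b)] = ψ(a)_{il} X̃^{(r+s-1)}_{kj}(b) − ψ(b)_{kj} X̃^{(r+s-1)}_{il}(a) + h·Σ_{m=1}^{min(r,s)-1} ( X̃^{(m)}_{il}(a) X̃^{(r+s-1-m)}_{kj}(b) − X̃^{(r+s-1-m)}_{il}(a) X̃^{(m)}_{kj}(b) ), for all r, s ≥ 1; in particular at h = 0 the elements X̃^{(r)}_{ij}(a) satisfy the Lie relations of the current algebra 𝒜^{tern}[x] with X̃^{(r)} corresponding to degree x^{r-1}.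 -/
/-!
Write `r = r' + 1`, `s = s' + 1`. The commutator of the rescaled generators is `h^(r'+s')` times
the commutator of the `X`'s, which the relation expands as a sum over `p`. The term `p = 1`
contains `X^(0) = ψ(·)·1`, and yields the two linear terms. Every other term `p = q + 1`
carries exactly one surplus factor of `h`, since `h * h^(q-1) * h^(r'+s'-q) = h^(r'+s')`.
-/

open Finset

theorem Finset.sum_Icc_one_succ {M : Type*} [AddCommMonoid M] (f : ℕ → M) (n : ℕ) :
    ∑ p ∈ Icc 1 (n + 1), f p = f 1 + ∑ q ∈ Icc 1 n, f (q + 1) := by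
  induction n with
  | zero => simp
  | succ n ih =>
    rw [sum_Icc_succ_top (by omega), ih, sum_Icc_succ_top (by omega), add_assoc]

section Rescaling

variable {R Y ι L : Type*} [CommSemiring R] [Ring Y] [Algebra R Y]
  {X Xt : ℕ → ι → ι → L → Y} {h : R}

theorem rescaled_commutator (hXt : ∀ r i j a, Xt r i j a = h ^ (r - 1) • X r i j a)
    (r s : ℕ) (i j k l : ι) (a b : L) :
    Xt (r + 1) i j a * Xt (s + 1) k l b - Xt (s + 1) k l b * Xt (r + 1) i j a
      = h ^ (r + s) • (X (r + 1) i j a * X (s + 1) k l b - X (s + 1) k l b * X (r + 1) i j a) := by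
  simp only [hXt, Nat.add_sub_cancel, smul_mul_smul_comm, mul_comm (h ^ s), ← pow_add, smul_sub]

theorem rescaled_leading_term {c : ι → ι → L → R}
    (hX0 : ∀ i j a, X 0 i j a = algebraMap R Y (c i j a))
    (hXt : ∀ r i j a, Xt r i j a = h ^ (r - 1) • X r i j a) (n : ℕ) (i j k l : ι) (a b : L) :
    h ^ n • (X 0 i l a * X (n + 1) k j b - X (n + 1) i l a * X 0 k j b)
      = c i l a • Xt (n + 1) k j b - c k j b • Xt (n + 1) i l a := by
  simp only [hX0, hXt, Nat.add_sub_cancel, ← Algebra.smul_def, ← Algebra.commutes, smul_sub,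
    smul_comm (h ^ n)]

theorem rescaled_product_term (hXt : ∀ r i j a, Xt r i j a = h ^ (r - 1) • X r i j a)
    {n q : ℕ} (hq : 1 ≤ q) (hqn : q ≤ n) (i j k l : ι) (a b : L) :
    h ^ n • (X q i l a * X (n + 1 - q) k j b - X (n + 1 - q) i l a * X q k j b)
      = h • (Xt q i l a * Xt (n + 1 - q) k j b - Xt (n + 1 - q) i l a * Xt q k j b) := by
  have hexp : h * (h ^ (q - 1) * h ^ (n - q)) = h ^ n := by
    rw [← pow_add, ← pow_succ']
    congr 1
    omega
  simp only [hXt, show n + 1 - q - 1 = n - q by omega, smul_mul_smul_comm,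
    mul_comm (h ^ (n - q)), ← smul_sub, smul_smul, hexp]

theorem rescaled_relation {c : ι → ι → L → R}
    (hX0 : ∀ i j a, X 0 i j a = algebraMap R Y (c i j a))
    (hrel : ∀ (r s : ℕ) (i j k l : ι) (a b : L),
      X r i j a * X s k l b - X s k l b * X r i j a
        = ∑ p ∈ Icc 1 (min r s),
            (X (p - 1) i l a * X (r + s - p) k j b - X (r + s - p) i l a * X (p - 1) k j b))
    (hXt : ∀ r i j a, Xt r i j a = h ^ (r - 1) • X r i j a) (r s : ℕ) (i j k l : ι) (a b : L) :
    Xt (r + 1) i j a * Xt (s + 1) k l b - Xt (s + 1) k l b * Xt (r + 1) i j a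
      = c i l a • Xt (r + s + 1) k j b - c k j b • Xt (r + s + 1) i l a
        + h • ∑ q ∈ Icc 1 (min r s),
            (Xt q i l a * Xt (r + s + 1 - q) k j b - Xt (r + s + 1 - q) i l a * Xt q k j b) := by
  rw [rescaled_commutator hXt, hrel, Nat.succ_min_succ, sum_Icc_one_succ, smul_add, smul_sum,
    smul_sum]
  simp only [Nat.add_sub_cancel, show r + 1 + (s + 1) - 1 = r + s + 1 by omega,
    show ∀ q, r + 1 + (s + 1) - (q + 1) = r + s + 1 - q by omega]
  rw [rescaled_leading_term hX0 hXt]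
  congr 1
  refine sum_congr rfl fun q hq => ?_
  rw [mem_Icc] at hq
  exact rescaled_product_term hXt hq.1 (by omega) i j k l a b

end Rescaling

attribute [local instance 100] LieRing.ofAssociativeRing

/-- substituting `X̃^{(r)}_{ij}(a) := h^{r-1} X^{(r)}_{ij}(a)` into the
polarized ternary relations yields, for all `r, s ≥ 1`:
`[X̃^{(r)}_{ij}(a), X̃^{(s)}_{kl}(b)]
  = ψ(a)_{il} X̃^{(r+s-1)}_{kj}(b) − ψ(b)_{kj} X̃^{(r+s-1)}_{il}(a)
    + h·Σ_{m=1}^{min(r,s)-1} (X̃^{(m)}_{il}(a) X̃^{(r+s-1-m)}_{kj}(b)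
        − X̃^{(r+s-1-m)}_{il}(a) X̃^{(m)}_{kj}(b))`;
at `h = 0` these are the Lie relations of the current algebra `𝒜^{tern}[x]`. -/
theorem stmt_19 {Y L : Type*} [Ring Y] [Algebra ℂ Y]
    [LieRing L] [LieAlgebra ℂ L] {m : ℕ}
    (ψ : L →ₗ⁅ℂ⁆ Matrix (Fin m) (Fin m) ℂ)
    (X : ℕ → Fin m → Fin m → L → Y)
    (hX0 : ∀ (i j : Fin m) (a : L), X 0 i j a = algebraMap ℂ Y ((ψ a) i j))
    (hrel : ∀ (r s : ℕ) (i j k l : Fin m) (a b : L),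
      X r i j a * X s k l b - X s k l b * X r i j a
        = ∑ p ∈ Finset.Icc 1 (min r s),
            (X (p - 1) i l a * X (r + s - p) k j b
              - X (r + s - p) i l a * X (p - 1) k j b))
    (h : ℂ)
    (Xt : ℕ → Fin m → Fin m → L → Y)
    (hXt : ∀ (r : ℕ) (i j : Fin m) (a : L), Xt r i j a = h ^ (r - 1) • X r i j a)
    (r s : ℕ) (hr : 1 ≤ r) (hs : 1 ≤ s) (i j k l : Fin m) (a b : L) :
    Xt r i j a * Xt s k l b - Xt s k l b * Xt r i j a
      = (ψ a) i l • Xt (r + s - 1) k j b - (ψ b) k j • Xt (r + s - 1) i l a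
        + h • ∑ p ∈ Finset.Icc 1 (min r s - 1),
            (Xt p i l a * Xt (r + s - 1 - p) k j b
              - Xt (r + s - 1 - p) i l a * Xt p k j b) := by
  obtain ⟨r, rfl⟩ := Nat.exists_eq_add_of_le' hr
  obtain ⟨s, rfl⟩ := Nat.exists_eq_add_of_le' hs
  rw [show r + 1 + (s + 1) - 1 = r + s + 1 by omega, Nat.succ_min_succ, Nat.succ_sub_one]
  exact rescaled_relation (c := fun i j a => ψ a i j) hX0 hrel hXt r s i j k l a b
end
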